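/- arXiv:2605.25743 — 11 statements merged into one kernel-verified Lean document; each statement's English description precedes it below -/
import Mathlib

section
/- Let n ≥ 3 and let x_1, …, x_n be real numbers. Set x̄ = (1/n) ∑_i x_i, p_2 = ∑_i (x_i - x̄)^2 and p_3 = ∑_i (x_i - x̄)^3. Then (n-2)^2 · p_2^3 ≥ n(n-1) · p_3^2, i.e. p_2^3 ≥ (n(n-1)/(n-2)^2) · p_3^2. -/
open Finset

theorem skewness_inequality
    (n : ℕ) (hn : 3 ≤ n) (x : Fin n → ℝ) (xbar p₂ p₃ : ℝ)
    (hxbar : xbar = (∑ i, x i) / n)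
    (hp₂ : p₂ = ∑ i, (x i - xbar) ^ 2)
    (hp₃ : p₃ = ∑ i, (x i - xbar) ^ 3) :
    ((n : ℝ) - 2) ^ 2 * p₂ ^ 3 ≥ (n : ℝ) * ((n : ℝ) - 1) * p₃ ^ 2
    ∧ p₂ ^ 3 ≥ ((n : ℝ) * ((n : ℝ) - 1) / ((n : ℝ) - 2) ^ 2) * p₃ ^ 2 := by
  have hnR : (3:ℝ) ≤ (n:ℝ) := by exact_mod_cast hn
  have hn0 : (0:ℝ) < (n:ℝ) := by linarith
  set y : Fin n → ℝ := fun i => x i - xbar with hy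
  have hcard : (Finset.univ : Finset (Fin n)).card = n := by simp
  have hS1 : ∑ i, y i = 0 := by
    have : ∑ i, y i = (∑ i, x i) - (n:ℝ) * xbar := by
      simp [hy, Finset.sum_sub_distrib, hcard, nsmul_eq_mul]
    rw [this, hxbar]
    field_simp
    ring
  set S2 := ∑ i, y i ^ 2 with hS2def
  set S3 := ∑ i, y i ^ 3 with hS3def
  set S4 := ∑ i, y i ^ 4 with hS4def
  have hS2nn : 0 ≤ S2 := Finset.sum_nonneg fun i _ => sq_nonneg _
  have helper : ∀ (c0 c1 c2 c3 c4 : ℝ),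
      ∑ j, (c0 + c1 * y j + c2 * y j ^ 2 + c3 * y j ^ 3 + c4 * y j ^ 4)
        = (n:ℝ) * c0 + c2 * S2 + c3 * S3 + c4 * S4 := by
    intro c0 c1 c2 c3 c4
    rw [Finset.sum_add_distrib, Finset.sum_add_distrib, Finset.sum_add_distrib,
      Finset.sum_add_distrib, ← Finset.mul_sum, ← Finset.mul_sum, ← Finset.mul_sum,
      ← Finset.mul_sum, Finset.sum_const, hS1, hcard]
    ring
  -- Cauchy–Schwarz: (n S3)^2 ≤ S2 (n² S4 - n S2²)
  have hCS : ((n:ℝ) * S3) ^ 2 ≤ S2 * ((n:ℝ)^2 * S4 - (n:ℝ) * S2 ^ 2) := by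
    have h := Finset.sum_mul_sq_le_sq_mul_sq Finset.univ y
      (fun i => (n:ℝ) * y i ^ 2 - S2)
    have e1 : ∑ i, y i * ((n:ℝ) * y i ^ 2 - S2) = (n:ℝ) * S3 := by
      calc ∑ i, y i * ((n:ℝ) * y i ^ 2 - S2)
          = ∑ i, (0 + (-S2) * y i + 0 * y i ^ 2 + (n:ℝ) * y i ^ 3 + 0 * y i ^ 4) :=
            Finset.sum_congr rfl fun i _ => by ring
        _ = (n:ℝ) * S3 := by rw [helper]; ring
    have e2 : ∑ i, ((n:ℝ) * y i ^ 2 - S2) ^ 2 = (n:ℝ)^2 * S4 - (n:ℝ) * S2 ^ 2 := by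
      calc ∑ i, ((n:ℝ) * y i ^ 2 - S2) ^ 2
          = ∑ i, (S2^2 + 0 * y i + (-(2*(n:ℝ)*S2)) * y i ^ 2 + 0 * y i ^ 3 + (n:ℝ)^2 * y i ^ 4) :=
            Finset.sum_congr rfl fun i _ => by ring
        _ = (n:ℝ)^2 * S4 - (n:ℝ) * S2 ^ 2 := by rw [helper]; ring
    rw [e1, e2] at h
    exact h
  -- pairwise bound
  have pair : ∀ i j : Fin n,
      (y i - y j)^2 * (y i + y j)^2
        ≤ ((n:ℝ) - 2) * ((y i - y j)^2 * (S2 - y i ^ 2 - y j ^ 2)) := by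
    intro i j
    rcases eq_or_ne i j with h | h
    · simp [h]
    · have hsub : (y i + y j)^2 ≤ ((n:ℝ) - 2) * (S2 - y i ^ 2 - y j ^ 2) := by
        set s : Finset (Fin n) := Finset.univ \ {i, j} with hs
        have hsubset : ({i, j} : Finset (Fin n)) ⊆ Finset.univ := Finset.subset_univ _
        have hcards : s.card = n - 2 := by
          rw [hs, Finset.card_sdiff_of_subset hsubset, hcard, Finset.card_pair h]
        have hsum : ∑ k ∈ s, y k = -(y i + y j) := by
          have h0 := Finset.sum_sdiff hsubset (f := y)
          rw [Finset.sum_pair h, hS1] at h0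
          linarith
        have hsum2 : ∑ k ∈ s, y k ^ 2 = S2 - y i ^ 2 - y j ^ 2 := by
          have := Finset.sum_sdiff hsubset (f := fun k => y k ^ 2)
          rw [Finset.sum_pair h] at this
          rw [← hS2def] at this
          linarith
        have hcs := sq_sum_le_card_mul_sum_sq (s := s) (f := y)
        rw [hsum, hsum2, hcards, neg_sq] at hcs
        have hcast : ((n - 2 : ℕ) : ℝ) = (n:ℝ) - 2 := by
          have : (2:ℕ) ≤ n := by omega
          push_cast [Nat.cast_sub this]
          ring
        calc (y i + y j)^2 ≤ ((n - 2 : ℕ) : ℝ) * (S2 - y i ^ 2 - y j ^ 2) := hcs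
          _ = ((n:ℝ) - 2) * (S2 - y i ^ 2 - y j ^ 2) := by rw [hcast]
      calc (y i - y j)^2 * (y i + y j)^2
          ≤ (y i - y j)^2 * (((n:ℝ) - 2) * (S2 - y i ^ 2 - y j ^ 2)) :=
            mul_le_mul_of_nonneg_left hsub (sq_nonneg _)
        _ = ((n:ℝ) - 2) * ((y i - y j)^2 * (S2 - y i ^ 2 - y j ^ 2)) := by ring
  have hsumpair : ∑ i, ∑ j, (y i - y j)^2 * (y i + y j)^2
      ≤ ∑ i, ∑ j, ((n:ℝ) - 2) * ((y i - y j)^2 * (S2 - y i ^ 2 - y j ^ 2)) :=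
    Finset.sum_le_sum fun i _ => Finset.sum_le_sum fun j _ => pair i j
  have idL : ∑ i, ∑ j, (y i - y j)^2 * (y i + y j)^2 = 2 * (n:ℝ) * S4 - 2 * S2 ^ 2 := by
    have inner : ∀ i : Fin n, ∑ j, (y i - y j)^2 * (y i + y j)^2
        = (n:ℝ) * y i ^ 4 - 2 * S2 * y i ^ 2 + S4 := by
      intro i
      calc ∑ j, (y i - y j)^2 * (y i + y j)^2
          = ∑ j, (y i ^ 4 + 0 * y j + (-(2 * y i ^ 2)) * y j ^ 2 + 0 * y j ^ 3 + 1 * y j ^ 4) :=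
            Finset.sum_congr rfl fun j _ => by ring
        _ = _ := by rw [helper]; ring
    calc ∑ i, ∑ j, (y i - y j)^2 * (y i + y j)^2
        = ∑ i, ((n:ℝ) * y i ^ 4 - 2 * S2 * y i ^ 2 + S4) :=
          Finset.sum_congr rfl fun i _ => inner i
      _ = ∑ i, (S4 + 0 * y i + (-(2 * S2)) * y i ^ 2 + 0 * y i ^ 3 + (n:ℝ) * y i ^ 4) :=
          Finset.sum_congr rfl fun i _ => by ring
      _ = 2 * (n:ℝ) * S4 - 2 * S2 ^ 2 := by rw [helper]; ring
  have idR : ∑ i, ∑ j, ((n:ℝ) - 2) * ((y i - y j)^2 * (S2 - y i ^ 2 - y j ^ 2))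
      = ((n:ℝ) - 2) * (2 * (n:ℝ) * S2 ^ 2 - 2 * S2 ^ 2 - 2 * (n:ℝ) * S4) := by
    have inner : ∀ i : Fin n, ∑ j, (y i - y j)^2 * (S2 - y i ^ 2 - y j ^ 2)
        = (n:ℝ) * (y i ^ 2 * (S2 - y i ^ 2)) + (S2 - 2 * y i ^ 2) * S2 + 2 * y i * S3 - S4 := by
      intro i
      calc ∑ j, (y i - y j)^2 * (S2 - y i ^ 2 - y j ^ 2)
          = ∑ j, (y i ^ 2 * (S2 - y i ^ 2) + (-(2 * y i * (S2 - y i ^ 2))) * y j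
              + (S2 - 2 * y i ^ 2) * y j ^ 2 + (2 * y i) * y j ^ 3 + (-1) * y j ^ 4) :=
            Finset.sum_congr rfl fun j _ => by ring
        _ = _ := by rw [helper]; ring
    calc ∑ i, ∑ j, ((n:ℝ) - 2) * ((y i - y j)^2 * (S2 - y i ^ 2 - y j ^ 2))
        = ∑ i, ((n:ℝ) - 2) * ((n:ℝ) * (y i ^ 2 * (S2 - y i ^ 2)) + (S2 - 2 * y i ^ 2) * S2
            + 2 * y i * S3 - S4) := by
          refine Finset.sum_congr rfl fun i _ => ?_
          rw [← Finset.mul_sum, inner i]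
      _ = ∑ i, ((((n:ℝ)-2) * (S2 * S2 - S4)) + (((n:ℝ)-2) * (2 * S3)) * y i
            + (((n:ℝ)-2) * ((n:ℝ) * S2 - 2 * S2)) * y i ^ 2 + 0 * y i ^ 3
            + (-(((n:ℝ)-2) * (n:ℝ))) * y i ^ 4) :=
          Finset.sum_congr rfl fun i _ => by ring
      _ = _ := by rw [helper]; ring
  have hkurt : 2 * (n:ℝ) * S4 - 2 * S2 ^ 2
      ≤ ((n:ℝ) - 2) * (2 * (n:ℝ) * S2 ^ 2 - 2 * S2 ^ 2 - 2 * (n:ℝ) * S4) := by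
    rw [← idL, ← idR]; exact hsumpair
  -- combine
  have hAB : 0 ≤ (n:ℝ) * (((n:ℝ) - 2)^2 * S2^3 - (n:ℝ) * ((n:ℝ) - 1) * S3^2) := by
    have hA : 0 ≤ S2 * ((n:ℝ)^2 * S4 - (n:ℝ) * S2 ^ 2) - ((n:ℝ) * S3) ^ 2 := by linarith
    have hB : 0 ≤ ((n:ℝ)^2 - 3*(n:ℝ) + 3) * S2^2 - (n:ℝ) * ((n:ℝ) - 1) * S4 := by nlinarith
    have h1 : 0 ≤ ((n:ℝ) - 1) * (S2 * ((n:ℝ)^2 * S4 - (n:ℝ) * S2 ^ 2) - ((n:ℝ) * S3) ^ 2) :=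
      mul_nonneg (by linarith) hA
    have h2 : 0 ≤ ((n:ℝ) * S2) * (((n:ℝ)^2 - 3*(n:ℝ) + 3) * S2^2 - (n:ℝ) * ((n:ℝ) - 1) * S4) :=
      mul_nonneg (mul_nonneg (le_of_lt hn0) hS2nn) hB
    nlinarith [h1, h2]
  have hmain : ((n:ℝ) - 2) ^ 2 * S2 ^ 3 ≥ (n:ℝ) * ((n:ℝ) - 1) * S3 ^ 2 := by
    nlinarith [hAB, hn0]
  have hp2 : p₂ = S2 := hp₂
  have hp3 : p₃ = S3 := hp₃
  have hfirst : ((n : ℝ) - 2) ^ 2 * p₂ ^ 3 ≥ (n : ℝ) * ((n : ℝ) - 1) * p₃ ^ 2 := by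
    rw [hp2, hp3]; exact hmain
  refine ⟨hfirst, ?_⟩
  have hpos : (0:ℝ) < ((n:ℝ) - 2) ^ 2 := pow_pos (by linarith) 2
  rw [ge_iff_le, div_mul_eq_mul_div, div_le_iff₀ hpos]
  linarith [hfirst]
end

section
/- Let n ≥ 3 and let x_1, …, x_n be real numbers that are not all equal. Set x̄ = (1/n) ∑_i x_i, z_i = x_i - x̄, p_2 = ∑_i z_i^2 and p_3 = ∑_i z_i^3. Then p_2^3 = (n(n-1)/(n-2)^2) · p_3^2 holds if and only if there exist a permutation σ of {1, …, n} and a nonzero real number a such that z_{σ(1)} = ⋯ = z_{σ(n-1)} = a and z_{σ(n)} = -(n-1)a. -/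
open Finset

set_option maxHeartbeats 1000000 in
lemma skew_aux (n : ℕ) (hn : 3 ≤ n) (z : Fin n → ℝ)
    (hsum : ∑ i, z i = 0) (hp2 : 0 < ∑ i, z i ^ 2)
    (hp3 : ∑ i, z i ^ 3 ≤ 0)
    (heq : (∑ i, z i ^ 2) ^ 3 =
      ((n : ℝ) * ((n : ℝ) - 1) / ((n : ℝ) - 2) ^ 2) * (∑ i, z i ^ 3) ^ 2) :
    ∃ a : ℝ, 0 < a ∧ ∃ i₀ : Fin n, z i₀ = -((n : ℝ) - 1) * a ∧ ∀ j, j ≠ i₀ → z j = a := by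
  classical
  set N : ℝ := (n : ℝ) with hNdef
  have hN : (3 : ℝ) ≤ N := by rw [hNdef]; exact_mod_cast hn
  have hN0 : 0 < N := by linarith
  have hN1 : 0 < N - 1 := by linarith
  have hN2 : 0 < N - 2 := by linarith
  set P2 := ∑ i, z i ^ 2 with hP2def
  set P3 := ∑ i, z i ^ 3 with hP3def
  set s := Real.sqrt (P2 / (N * (N - 1))) with hsdef
  have hs : 0 < s := Real.sqrt_pos.2 (div_pos hp2 (by positivity))
  have hs2 : s ^ 2 = P2 / (N * (N - 1)) := Real.sq_sqrt (by positivity)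
  have hP2s : P2 = N * (N - 1) * s ^ 2 := by
    rw [hs2]; field_simp
  -- lower bound on each z i
  have hlb : ∀ i, -((N - 1) * s) ≤ z i := by
    intro i
    have h1 : ∑ j ∈ univ.erase i, z j = - z i := by
      have h : ∑ j ∈ univ.erase i, z j + z i = ∑ j, z j :=
        Finset.sum_erase_add univ z (mem_univ i)
      rw [hsum] at h; linarith
    have h2 : ∑ j ∈ univ.erase i, z j ^ 2 = P2 - z i ^ 2 := by
      have h : ∑ j ∈ univ.erase i, z j ^ 2 + z i ^ 2 = ∑ j, z j ^ 2 :=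
        Finset.sum_erase_add univ (fun j => z j ^ 2) (mem_univ i)
      rw [← hP2def] at h; linarith
    have hC := sq_sum_le_card_mul_sum_sq (s := univ.erase i) (f := z)
    rw [h1, h2] at hC
    have hcard : ((univ.erase i).card : ℝ) = N - 1 := by
      rw [Finset.card_erase_of_mem (mem_univ i), Finset.card_univ, Fintype.card_fin, hNdef]
      have h1n : 1 ≤ n := by omega
      push_cast [Nat.cast_sub h1n]
      ring
    rw [hcard] at hC
    have hsq : z i ^ 2 ≤ ((N - 1) * s) ^ 2 := by nlinarith
    by_contra hcon
    push_neg at hcon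
    have hb1 : 0 < -z i - (N - 1) * s := by linarith
    have hb2 : 0 < -z i + (N - 1) * s := by nlinarith
    nlinarith [mul_pos hb1 hb2]
  -- value of P3
  have hP3v : P3 = -(N * (N - 1) * (N - 2) * s ^ 3) := by
    have e1 : N * (N - 1) * P3 ^ 2 = (N - 2) ^ 2 * P2 ^ 3 := by
      field_simp at heq
      linarith
    have e2 : N * (N - 1) * P3 ^ 2 = N * (N - 1) * ((N * (N - 1) * (N - 2) * s ^ 3) ^ 2) := by
      rw [e1, hP2s]; ring
    have e3 : P3 ^ 2 = (N * (N - 1) * (N - 2) * s ^ 3) ^ 2 :=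
      mul_left_cancel₀ (by positivity) e2
    have e4 : (P3 - N * (N - 1) * (N - 2) * s ^ 3) * (P3 + N * (N - 1) * (N - 2) * s ^ 3) = 0 := by
      nlinarith [e3]
    rcases mul_eq_zero.1 e4 with h | h
    · have hKpos : 0 < N * (N - 1) * (N - 2) * s ^ 3 := by positivity
      linarith
    · linarith
  -- sum of nonneg terms is zero
  have hzero : ∑ i, (z i + (N - 1) * s) * (z i - s) ^ 2 = 0 := by
    have key : ∑ i, (z i + (N - 1) * s) * (z i - s) ^ 2
        = P3 + ((N - 3) * s) * P2 + ((s ^ 2 - 2 * (N - 1) * s ^ 2)) * (∑ i, z i)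
          + N * ((N - 1) * s ^ 3) := by
      rw [hP3def, hP2def, Finset.mul_sum, Finset.mul_sum, ← Finset.sum_add_distrib,
        ← Finset.sum_add_distrib]
      have hNn : N * ((N - 1) * s ^ 3) = ∑ _i : Fin n, (N - 1) * s ^ 3 := by
        rw [Finset.sum_const, Finset.card_univ, Fintype.card_fin, nsmul_eq_mul, hNdef]
      rw [hNn, ← Finset.sum_add_distrib]
      exact Finset.sum_congr rfl (fun i _ => by ring)
    rw [key, hsum, hP3v, hP2s]; ring
  have hterm : ∀ i ∈ (univ : Finset (Fin n)), (z i + (N - 1) * s) * (z i - s) ^ 2 = 0 := by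
    rw [← Finset.sum_eq_zero_iff_of_nonneg]
    · exact hzero
    · intro i _
      have h0 := hlb i
      have h1 : 0 ≤ z i + (N - 1) * s := by linarith
      positivity
  have hdich : ∀ i : Fin n, z i = -((N - 1) * s) ∨ z i = s := by
    intro i
    rcases mul_eq_zero.1 (hterm i (mem_univ i)) with h | h
    · left; linarith
    · right
      have := pow_eq_zero_iff (n := 2) (by norm_num) |>.1 h
      linarith
  -- count
  set T := univ.filter (fun i => z i = -((N - 1) * s)) with hTdef
  set k := T.card with hkdef
  have hcompl : ∀ j ∈ univ.filter (fun i => ¬ (z i = -((N - 1) * s))), z j = s := by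
    intro j hj
    rw [mem_filter] at hj
    rcases hdich j with h | h
    · exact absurd h hj.2
    · exact h
  have hsplit := Finset.sum_filter_add_sum_filter_not univ (fun i => z i = -((N - 1) * s)) z
  rw [hsum] at hsplit
  have hT1 : ∑ j ∈ T, z j = k * (-((N - 1) * s)) := by
    rw [Finset.sum_congr rfl (fun j hj => (mem_filter.1 hj).2), Finset.sum_const, nsmul_eq_mul]
  have hkn : k ≤ n := by
    rw [hkdef]
    calc T.card ≤ (univ : Finset (Fin n)).card := Finset.card_filter_le _ _
    _ = n := by rw [Finset.card_univ, Fintype.card_fin]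
  have hcardc : ((univ.filter (fun i => ¬ (z i = -((N - 1) * s)))).card : ℝ) = N - k := by
    have h := Finset.card_filter_add_card_filter_not
      (s := (univ : Finset (Fin n))) (p := fun i => z i = -((N - 1) * s))
    rw [Finset.card_univ, Fintype.card_fin, ← hTdef, ← hkdef] at h
    have h2 : (univ.filter (fun i => ¬ (z i = -((N - 1) * s)))).card = n - k := by omega
    rw [h2, hNdef]
    push_cast [Nat.cast_sub hkn]
    ring
  have hT2 : ∑ j ∈ univ.filter (fun i => ¬ (z i = -((N - 1) * s))), z j = (N - k) * s := by
    rw [Finset.sum_congr rfl hcompl, Finset.sum_const, nsmul_eq_mul, hcardc]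
  rw [hT1, hT2] at hsplit
  have hkval : (k : ℝ) = 1 := by
    have h2 : s * (N * (1 - (k : ℝ))) = 0 := by linear_combination hsplit
    rcases mul_eq_zero.1 h2 with h | h
    · exact absurd h (ne_of_gt hs)
    · rcases mul_eq_zero.1 h with h | h
      · exact absurd h (ne_of_gt hN0)
      · linarith
  have hk1 : k = 1 := by exact_mod_cast hkval
  obtain ⟨i₀, hi₀⟩ := Finset.card_eq_one.1 hk1
  refine ⟨s, hs, i₀, ?_, ?_⟩
  · have hmem : i₀ ∈ T := by rw [hi₀]; exact Finset.mem_singleton_self i₀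
    rw [hTdef, mem_filter] at hmem
    rw [hmem.2]; ring
  · intro j hj
    rcases hdich j with h | h
    · exfalso
      have hmem : j ∈ T := by rw [hTdef, mem_filter]; exact ⟨mem_univ j, h⟩
      rw [hi₀, Finset.mem_singleton] at hmem
      exact hj hmem
    · exact h
theorem skewness_equality_case
    (n : ℕ) (hn : 3 ≤ n) (x : Fin n → ℝ)
    (hne : ¬ ∀ i j, x i = x j)
    (xbar : ℝ) (hxbar : xbar = (∑ i, x i) / n)
    (z : Fin n → ℝ) (hz : ∀ i, z i = x i - xbar)
    (p₂ p₃ : ℝ) (hp₂ : p₂ = ∑ i, z i ^ 2) (hp₃ : p₃ = ∑ i, z i ^ 3) :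
    p₂ ^ 3 = ((n : ℝ) * ((n : ℝ) - 1) / ((n : ℝ) - 2) ^ 2) * p₃ ^ 2
      ↔ ∃ (σ : Equiv.Perm (Fin n)) (a : ℝ), a ≠ 0 ∧
          ∀ i : Fin n, z (σ i) = if (i : ℕ) < n - 1 then a else -((n : ℝ) - 1) * a := by
  have hn0 : (n : ℝ) ≠ 0 := by positivity
  have hsum : ∑ i, z i = 0 := by
    have h1 : ∑ i, z i = (∑ i, x i) - n * xbar := by
      simp only [hz, Finset.sum_sub_distrib, Finset.sum_const, Finset.card_univ,
        Fintype.card_fin, nsmul_eq_mul]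
    rw [h1, hxbar]
    field_simp
    ring
  have hp2pos : 0 < ∑ i, z i ^ 2 := by
    push_neg at hne
    obtain ⟨i, j, hij⟩ := hne
    have hzij : z i ≠ z j := fun h => hij (by rw [hz, hz] at h; linarith)
    have hex : ∃ i₁, z i₁ ≠ 0 := by
      by_cases h : z i = 0
      · exact ⟨j, fun hj => hzij (by rw [h, hj])⟩
      · exact ⟨i, h⟩
    obtain ⟨i₁, hi₁⟩ := hex
    exact Finset.sum_pos' (fun k _ => sq_nonneg _)
      ⟨i₁, Finset.mem_univ i₁, by positivity⟩
  constructor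
  · intro heq
    have hmain : ∃ a : ℝ, a ≠ 0 ∧ ∃ i₀ : Fin n,
        z i₀ = -((n : ℝ) - 1) * a ∧ ∀ j, j ≠ i₀ → z j = a := by
      rcases le_total (∑ i, z i ^ 3) 0 with hle | hle
      · obtain ⟨a, ha, i₀, h1, h2⟩ := skew_aux n hn z hsum hp2pos hle
          (by rw [← hp₂, ← hp₃]; exact heq)
        exact ⟨a, ne_of_gt ha, i₀, h1, h2⟩
      · have hs0 : ∑ i, (-z i) = 0 := by
          rw [Finset.sum_neg_distrib, hsum, neg_zero]
        have hs2 : ∑ i, (-z i) ^ 2 = ∑ i, z i ^ 2 :=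
          Finset.sum_congr rfl (fun i _ => by ring)
        have hs3 : ∑ i, (-z i) ^ 3 = -∑ i, z i ^ 3 := by
          rw [← Finset.sum_neg_distrib]
          exact Finset.sum_congr rfl (fun i _ => by ring)
        obtain ⟨a, ha, i₀, h1, h2⟩ := skew_aux n hn (fun i => -z i) hs0
          (by rw [hs2]; exact hp2pos) (by rw [hs3]; linarith)
          (by rw [hs2, hs3, ← hp₂]; rw [heq, hp₃]; ring)
        refine ⟨-a, by simpa using (ne_of_gt ha), i₀, ?_, ?_⟩
        · have := h1
          linarith [this]
        · intro j hj
          have := h2 j hj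
          linarith [this]
    obtain ⟨a, ha, i₀, h1, h2⟩ := hmain
    have hlt : n - 1 < n := by omega
    refine ⟨Equiv.swap i₀ ⟨n - 1, hlt⟩, a, ha, ?_⟩
    intro i
    by_cases hi : i = ⟨n - 1, hlt⟩
    · subst hi
      rw [if_neg (by simp)]
      rw [Equiv.swap_apply_right]
      exact h1
    · have hival : (i : ℕ) < n - 1 := by
        have h4 : (i : ℕ) ≠ n - 1 := fun h => hi (Fin.ext h)
        omega
      rw [if_pos hival]
      have hne' : Equiv.swap i₀ ⟨n - 1, hlt⟩ i ≠ i₀ := by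
        intro h
        have := (Equiv.swap i₀ ⟨n - 1, hlt⟩).injective
          (h.trans (Equiv.swap_apply_right i₀ ⟨n - 1, hlt⟩).symm)
        exact hi this
      exact h2 _ hne'
  · rintro ⟨σ, a, ha, hσ⟩
    obtain ⟨m, rfl⟩ : ∃ m, n = m + 1 := ⟨n - 1, by omega⟩
    have hm : 2 ≤ m := by omega
    have key : ∀ r : ℕ, ∑ i, z i ^ r
        = m * a ^ r + (-(((m + 1 : ℕ) : ℝ) - 1) * a) ^ r := by
      intro r
      rw [← Equiv.sum_comp σ (fun i => z i ^ r), Fin.sum_univ_castSucc]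
      have hlast : z (σ (Fin.last m)) = -(((m + 1 : ℕ) : ℝ) - 1) * a := by
        rw [hσ, if_neg (by simp [Fin.last])]
      have hcs : ∀ j : Fin m, z (σ (Fin.castSucc j)) = a := by
        intro j
        rw [hσ, if_pos]
        simp only [Fin.coe_castSucc]
        omega
      rw [hlast, Finset.sum_congr rfl (fun j _ => by rw [hcs j]),
        Finset.sum_const, Finset.card_univ, Fintype.card_fin, nsmul_eq_mul]
    rw [hp₂, hp₃, key 2, key 3]
    have hM : (2 : ℝ) ≤ (m : ℝ) := by exact_mod_cast hm
    have hM1 : (m : ℝ) - 1 ≠ 0 := by linarith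
    push_cast
    have hgoal : ∀ M : ℝ, M - 1 ≠ 0 →
        (M * a ^ 2 + (-(M + 1 - 1) * a) ^ 2) ^ 3
        = (M + 1) * (M + 1 - 1) / (M + 1 - 2) ^ 2
          * (M * a ^ 3 + (-(M + 1 - 1) * a) ^ 3) ^ 2 := by
      intro M hM'
      have hne2 : (M + 1 - 2) ^ 2 ≠ 0 :=
        pow_ne_zero 2 (fun h => hM' (by linarith))
      rw [div_mul_eq_mul_div, eq_div_iff hne2]
      ring
    exact hgoal (m : ℝ) hM1
end

section
/- Let n ≥ 2, let 1 ≤ r ≤ n-1, and let z_1, …, z_n be real numbers such that exactly r of them equal u and the remaining n-r equal v, where u, v are real numbers with ∑_{i=1}^n z_i = 0 (i.e. r·u + (n-r)·v = 0). Set p_2 = ∑_i z_i^2 and p_3 = ∑_i z_i^3. Then p_3^2 · r(n-r)n = (n-2r)^2 · p_2^3. -/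
/-! A two-valued configuration has power sums `p_k = a u^k + b v^k` with `a = r`, `b = n - r`.
On the line `a u + b v = 0` write `u = b t`, `v = -a t`: then `p₂ = ab(a+b) t²` and
`p₃ = ab(a+b)(b-a) t³`, so both sides of the identity equal `a³b³(a+b)³(b-a)² t⁶`. -/

open Finset

theorem Finset.sum_eq_card_nsmul_add_card_compl_nsmul {ι M : Type*} [Fintype ι] [DecidableEq ι]
    [AddCommMonoid M] {f : ι → M} {S : Finset ι} {x y : M}
    (hx : ∀ i ∈ S, f i = x) (hy : ∀ i ∉ S, f i = y) :
    ∑ i, f i = #S • x + #Sᶜ • y := by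
  rw [← sum_add_sum_compl S, sum_eq_card_nsmul hx,
    sum_eq_card_nsmul fun i hi => hy i (mem_compl.1 hi)]

-- The difference of the two sides lies in the ideal generated by `a u + b v`.
theorem moment_identity_of_weighted_sum_eq_zero {R : Type*} [CommRing R] {a b u v : R}
    (h : a * u + b * v = 0) :
    (a * u ^ 3 + b * v ^ 3) ^ 2 * (a * b * (a + b)) =
      (b - a) ^ 2 * (a * u ^ 2 + b * v ^ 2) ^ 3 := by
  grind

theorem two_valued_configuration_moment_identity_general
    (n r : ℕ)
    (u v : ℝ) (z : Fin n → ℝ) (S : Finset (Fin n)) (hS : S.card = r)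
    (hu : ∀ i ∈ S, z i = u) (hv : ∀ i ∉ S, z i = v)
    (hsum : ∑ i, z i = 0)
    (p₂ p₃ : ℝ) (hp₂ : p₂ = ∑ i, z i ^ 2) (hp₃ : p₃ = ∑ i, z i ^ 3) :
    p₃ ^ 2 * ((r : ℝ) * ((n : ℝ) - r) * n) = ((n : ℝ) - 2 * r) ^ 2 * p₂ ^ 3 := by
  have hcard : (#Sᶜ : ℝ) = n - r := by
    rw [card_compl, Fintype.card_fin, hS,
      Nat.cast_sub (hS ▸ (card_le_univ S).trans_eq (Fintype.card_fin n))]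
  have power_sum (k : ℕ) : ∑ i, z i ^ k = r * u ^ k + (n - r) * v ^ k := by
    rw [sum_eq_card_nsmul_add_card_compl_nsmul (fun i hi => by rw [hu i hi])
      (fun i hi => by rw [hv i hi]), nsmul_eq_mul, nsmul_eq_mul, hS, hcard]
  have hcentered : (r : ℝ) * u + (n - r) * v = 0 := by
    simpa only [pow_one, ← hsum] using (power_sum 1).symm
  rw [hp₂, hp₃, power_sum 2, power_sum 3]
  linear_combination moment_identity_of_weighted_sum_eq_zero hcentered

theorem two_valued_configuration_moment_identity
    (n r : ℕ) (hn : 2 ≤ n) (hr₁ : 1 ≤ r) (hr₂ : r ≤ n - 1)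
    (u v : ℝ) (z : Fin n → ℝ) (S : Finset (Fin n)) (hS : S.card = r)
    (hu : ∀ i ∈ S, z i = u) (hv : ∀ i ∉ S, z i = v)
    (hsum : ∑ i, z i = 0)
    (p₂ p₃ : ℝ) (hp₂ : p₂ = ∑ i, z i ^ 2) (hp₃ : p₃ = ∑ i, z i ^ 3) :
    p₃ ^ 2 * ((r : ℝ) * ((n : ℝ) - r) * n) = ((n : ℝ) - 2 * r) ^ 2 * p₂ ^ 3 :=
  two_valued_configuration_moment_identity_general n r u v z S hS hu hv hsum p₂ p₃ hp₂ hp₃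
end

section
/- Let n ≥ 4 and let x_1, …, x_n be real numbers. Set x̄ = (1/n) ∑_i x_i and p_r = ∑_i (x_i - x̄)^r for r = 2, 3, 4. Define A = n!/24, B = -((n-2)!/4) · p_2, C = -((n-3)!/3) · p_3, and D = (n-4)! · (p_2^2/8 - p_4/4). Then 256 A^3 D^3 - 128 A^2 B^2 D^2 + 144 A^2 B C^2 D - 27 A^2 C^4 + 16 A B^4 D - 4 A B^3 C^2 ≥ 0. -/
open Finset

section Aux

lemma newton_eval {n : ℕ} (y : Fin n → ℝ) (k : ℕ) :
    (k : ℝ) * (Multiset.map y Finset.univ.val).esymm k =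
      (-1) ^ (k + 1) * ∑ a ∈ (Finset.HasAntidiagonal.antidiagonal k).filter (fun a => a.1 < k),
        (-1) ^ a.1 * (Multiset.map y Finset.univ.val).esymm a.1 * (∑ i, y i ^ a.2) := by
  have h := congrArg (MvPolynomial.aeval y) (MvPolynomial.mul_esymm_eq_sum (Fin n) ℝ k)
  simpa [map_sum, map_mul, map_pow, MvPolynomial.aeval_esymm_eq_multiset_esymm,
    MvPolynomial.psum] using h

lemma esymm_vals {n : ℕ} (y : Fin n → ℝ) (h1 : ∑ i, y i = 0) :
    (Multiset.map y Finset.univ.val).esymm 1 = 0 ∧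
    (Multiset.map y Finset.univ.val).esymm 2 = -(∑ i, y i ^ 2) / 2 ∧
    (Multiset.map y Finset.univ.val).esymm 3 = (∑ i, y i ^ 3) / 3 ∧
    (Multiset.map y Finset.univ.val).esymm 4
      = (∑ i, y i ^ 2) ^ 2 / 8 - (∑ i, y i ^ 4) / 4 := by
  have e0 : (Multiset.map y Finset.univ.val).esymm 0 = 1 := by
    simp [Multiset.esymm]
  have h1' := newton_eval y 1
  have h2' := newton_eval y 2
  have h3' := newton_eval y 3
  have h4' := newton_eval y 4
  set s : Multiset ℝ := Multiset.map y Finset.univ.val with hs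
  rw [Finset.sum_filter, Finset.Nat.sum_antidiagonal_eq_sum_range_succ_mk] at h1' h2' h3' h4'
  simp only [Finset.sum_range_succ, Finset.sum_range_zero] at h1' h2' h3' h4'
  norm_num [e0, h1, pow_one] at h1' h2' h3' h4'
  refine ⟨h1', ?_, ?_, ?_⟩
  · linarith
  · rw [h1'] at h3'; linarith
  · rw [h1'] at h4'
    have h2'' : s.esymm 2 = -(∑ i, y i ^ 2) / 2 := by linarith
    rw [h2''] at h4'
    nlinarith [h4']

lemma card_roots_iterate (p : Polynomial ℝ) (k : ℕ) :
    Multiset.card p.roots ≤ Multiset.card ((Polynomial.derivative)^[k] p).roots + k := by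
  induction k generalizing p with
  | zero => simp
  | succ m ih =>
      calc Multiset.card p.roots ≤ Multiset.card (Polynomial.derivative p).roots + 1 :=
            p.card_roots_le_derivative
        _ ≤ (Multiset.card ((Polynomial.derivative)^[m] (Polynomial.derivative p)).roots + m) + 1 :=
            by exact Nat.add_le_add_right (ih _) 1
        _ = Multiset.card ((Polynomial.derivative)^[m+1] p).roots + (m + 1) := by
            rw [Function.iterate_succ_apply]; ring

lemma multiset_card_eq_four {α : Type*} {s : Multiset α} (h : Multiset.card s = 4) :
    ∃ a b c d, s = a ::ₘ b ::ₘ c ::ₘ {d} := by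
  have h0 : s ≠ 0 := by rintro rfl; simp at h
  obtain ⟨a, ha⟩ := Multiset.exists_mem_of_ne_zero h0
  obtain ⟨t, rfl⟩ := Multiset.exists_cons_of_mem ha
  have ht : Multiset.card t = 3 := by simpa using h
  obtain ⟨b, c, d, rfl⟩ := Multiset.card_eq_three.mp ht
  exact ⟨a, b, c, d, rfl⟩

/-- The quartic X⁴ expansion identity -/
lemma quartic_expand (r1 r2 r3 r4 : ℝ) :
    (Polynomial.X - Polynomial.C r1) * (Polynomial.X - Polynomial.C r2) *
      ((Polynomial.X - Polynomial.C r3) * (Polynomial.X - Polynomial.C r4)) =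
    Polynomial.X ^ 4 - Polynomial.C (r1 + r2 + r3 + r4) * Polynomial.X ^ 3
      + Polynomial.C (r1*r2 + r1*r3 + r1*r4 + r2*r3 + r2*r4 + r3*r4) * Polynomial.X ^ 2
      - Polynomial.C (r1*r2*r3 + r1*r2*r4 + r1*r3*r4 + r2*r3*r4) * Polynomial.X
      + Polynomial.C (r1*r2*r3*r4) := by
  simp only [map_add, map_mul]
  ring

end Aux

theorem terminal_quartic_discriminant_nonneg
    (n : ℕ) (hn : 4 ≤ n) (x : Fin n → ℝ)
    (xbar p₂ p₃ p₄ A B C D : ℝ)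
    (hxbar : xbar = (∑ i, x i) / n)
    (hp₂ : p₂ = ∑ i, (x i - xbar) ^ 2)
    (hp₃ : p₃ = ∑ i, (x i - xbar) ^ 3)
    (hp₄ : p₄ = ∑ i, (x i - xbar) ^ 4)
    (hA : A = (n.factorial : ℝ) / 24)
    (hB : B = -(((n - 2).factorial : ℝ) / 4) * p₂)
    (hC : C = -(((n - 3).factorial : ℝ) / 3) * p₃)
    (hD : D = ((n - 4).factorial : ℝ) * (p₂ ^ 2 / 8 - p₄ / 4)) :
    256 * A ^ 3 * D ^ 3 - 128 * A ^ 2 * B ^ 2 * D ^ 2 + 144 * A ^ 2 * B * C ^ 2 * D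
      - 27 * A ^ 2 * C ^ 4 + 16 * A * B ^ 4 * D - 4 * A * B ^ 3 * C ^ 2 ≥ 0 := by
  have hn0 : (n : ℝ) ≠ 0 := Nat.cast_ne_zero.mpr (by omega)
  set y : Fin n → ℝ := fun i => x i - xbar with hy
  have hS1 : ∑ i, y i = 0 := by
    simp only [hy, Finset.sum_sub_distrib, Finset.sum_const, Finset.card_univ,
      Fintype.card_fin, nsmul_eq_mul, hxbar]
    field_simp
    ring
  have hS2 : ∑ i, y i ^ 2 = p₂ := hp₂.symm
  have hS3 : ∑ i, y i ^ 3 = p₃ := hp₃.symm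
  have hS4 : ∑ i, y i ^ 4 = p₄ := hp₄.symm
  obtain ⟨hE1, hE2, hE3, hE4⟩ := esymm_vals y hS1
  rw [hS2] at hE2 hE4
  rw [hS3] at hE3
  rw [hS4] at hE4
  -- the polynomial
  set P : Polynomial ℝ := ∏ i, (Polynomial.X - Polynomial.C (y i)) with hP
  have hPm : P = ((Multiset.map y Finset.univ.val).map
      fun t => Polynomial.X - Polynomial.C t).prod := by
    rw [hP, Finset.prod_eq_multiset_prod, Multiset.map_map]; rfl
  have hProots : P.roots = Multiset.map y Finset.univ.val := by
    rw [hPm, Polynomial.roots_multiset_prod_X_sub_C]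
  have hPcard : Multiset.card P.roots = n := by simp [hProots]
  have hPmonic : P.Monic :=
    Polynomial.monic_prod_of_monic _ _ (fun i _ => Polynomial.monic_X_sub_C _)
  have hPdeg : P.natDegree = n := by
    rw [hP, Polynomial.natDegree_prod_of_monic _ _
      (fun i _ => Polynomial.monic_X_sub_C _)]
    simp
  have hPcoeff : ∀ j ≤ n, P.coeff (n - j) = (-1) ^ j * (Multiset.map y Finset.univ.val).esymm j := by
    intro j hj
    rw [hPm, Multiset.prod_X_sub_C_coeff _ (by simp)]
    have hcd : Multiset.card (Multiset.map y Finset.univ.val) - (n - j) = j := by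
      simp; omega
    rw [hcd]
  -- the iterated derivative
  set Q : Polynomial ℝ := (Polynomial.derivative)^[n - 4] P with hQ
  have hQcoeff : ∀ m, Q.coeff m = ((m + (n - 4)).descFactorial (n - 4) : ℝ) * P.coeff (m + (n - 4)) := by
    intro m
    rw [hQ, Polynomial.coeff_iterate_derivative, nsmul_eq_mul]
  have hfac : ∀ m k : ℕ, k ≤ m → (m.descFactorial k : ℝ) = (m.factorial : ℝ) / ((m - k).factorial : ℝ) := by
    intro m k hk
    have := Nat.factorial_mul_descFactorial hk
    have h2 : ((m - k).factorial : ℝ) ≠ 0 := Nat.cast_ne_zero.mpr (Nat.factorial_ne_zero _)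
    field_simp
    rw [mul_comm]
    exact_mod_cast this
  -- coefficient 4
  have hQ4 : Q.coeff 4 = A := by
    rw [hQcoeff 4, show 4 + (n - 4) = n by omega]
    have hcn : P.coeff n = 1 := by
      have := hPmonic.coeff_natDegree
      rwa [hPdeg] at this
    rw [hcn, hfac n (n-4) (by omega), show n - (n - 4) = 4 by omega, hA]
    norm_num [Nat.factorial]
  -- coefficient 3
  have hQ3 : Q.coeff 3 = 0 := by
    rw [hQcoeff 3, show 3 + (n - 4) = n - 1 by omega,
      show (n : ℕ) - 1 = n - 1 from rfl]
    have := hPcoeff 1 (by omega)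
    rw [this, hE1]
    ring
  -- coefficient 2
  have hQ2 : Q.coeff 2 = B := by
    rw [hQcoeff 2, show 2 + (n - 4) = n - 2 by omega, hPcoeff 2 (by omega), hE2,
      hfac (n-2) (n-4) (by omega), show n - 2 - (n - 4) = 2 by omega, hB]
    norm_num [Nat.factorial]
    ring
  -- coefficient 1
  have hQ1 : Q.coeff 1 = C := by
    rw [hQcoeff 1, show 1 + (n - 4) = n - 3 by omega, hPcoeff 3 (by omega), hE3,
      hfac (n-3) (n-4) (by omega), show n - 3 - (n - 4) = 1 by omega, hC]
    norm_num [Nat.factorial]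
    ring
  -- coefficient 0
  have hQ0 : Q.coeff 0 = D := by
    rw [hQcoeff 0, show 0 + (n - 4) = n - 4 by omega, hPcoeff 4 (by omega), hE4,
      Nat.descFactorial_self, hD]
    ring
  -- A is positive
  have hApos : 0 < A := by
    rw [hA]; positivity
  -- degree of Q
  have hQdeg : Q.natDegree = 4 := by
    have hle : Q.natDegree ≤ 4 := by
      have := Polynomial.natDegree_iterate_derivative P (n - 4)
      rw [hPdeg] at this
      calc Q.natDegree ≤ n - (n - 4) := this
        _ = 4 := by omega
    have hge : 4 ≤ Q.natDegree := Polynomial.le_natDegree_of_ne_zero (by rw [hQ4]; exact hApos.ne')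
    omega
  -- number of roots of Q
  have hQroots : Multiset.card Q.roots = 4 := by
    have h1 : Multiset.card Q.roots ≤ 4 := hQdeg ▸ Q.card_roots'
    have h2 := card_roots_iterate P (n - 4)
    rw [← hQ, hPcard] at h2
    omega
  have hQlead : Q.leadingCoeff = A := by
    rw [Polynomial.leadingCoeff, hQdeg, hQ4]
  obtain ⟨r1, r2, r3, r4, hr⟩ := multiset_card_eq_four hQroots
  have hsplit := Polynomial.C_leadingCoeff_mul_prod_multiset_X_sub_C
    (p := Q) (by rw [hQroots, hQdeg])
  rw [hQlead, hr] at hsplit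
  have hprod : (Multiset.map (fun a => Polynomial.X - Polynomial.C a)
      (r1 ::ₘ r2 ::ₘ r3 ::ₘ {r4})).prod =
      (Polynomial.X - Polynomial.C r1) * (Polynomial.X - Polynomial.C r2) *
        ((Polynomial.X - Polynomial.C r3) * (Polynomial.X - Polynomial.C r4)) := by
    simp only [Multiset.map_cons, Multiset.map_singleton, Multiset.prod_cons,
      Multiset.prod_singleton]
    ring
  rw [hprod, quartic_expand] at hsplit
  -- extract coefficients
  have hcoeffs : ∀ m : ℕ, Q.coeff m = (Polynomial.C A *
      (Polynomial.X ^ 4 - Polynomial.C (r1 + r2 + r3 + r4) * Polynomial.X ^ 3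
      + Polynomial.C (r1*r2 + r1*r3 + r1*r4 + r2*r3 + r2*r4 + r3*r4) * Polynomial.X ^ 2
      - Polynomial.C (r1*r2*r3 + r1*r2*r4 + r1*r3*r4 + r2*r3*r4) * Polynomial.X
      + Polynomial.C (r1*r2*r3*r4))).coeff m := by
    intro m; rw [hsplit]
  have hc3 := hcoeffs 3
  have hc2 := hcoeffs 2
  have hc1 := hcoeffs 1
  have hc0 := hcoeffs 0
  rw [hQ3] at hc3
  rw [hQ2] at hc2
  rw [hQ1] at hc1
  rw [hQ0] at hc0
  simp only [Polynomial.coeff_C_mul, Polynomial.coeff_add, Polynomial.coeff_sub,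
    Polynomial.coeff_X_pow, Polynomial.coeff_C, Polynomial.coeff_X,
    Polynomial.coeff_C_mul] at hc3 hc2 hc1 hc0
  norm_num at hc3 hc2 hc1 hc0
  -- sum of roots is zero
  have hs1 : r1 + r2 + r3 + r4 = 0 := by
    rcases hc3 with h | h
    · exact absurd h hApos.ne'
    · linarith
  have hr4 : r4 = -(r1 + r2 + r3) := by linarith
  subst hr4
  have key : 256 * A ^ 3 * D ^ 3 - 128 * A ^ 2 * B ^ 2 * D ^ 2 + 144 * A ^ 2 * B * C ^ 2 * D
      - 27 * A ^ 2 * C ^ 4 + 16 * A * B ^ 4 * D - 4 * A * B ^ 3 * C ^ 2 =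
      A ^ 6 * ((r1 - r2) * (r1 - r3) * (r1 - (-(r1 + r2 + r3))) * (r2 - r3) *
        (r2 - (-(r1 + r2 + r3))) * (r3 - (-(r1 + r2 + r3)))) ^ 2 := by
    rw [hc2, hc1, hc0]
    ring
  rw [key]
  positivity
end

section
/- Let n ≥ 4 and let z_1, …, z_n be real numbers with ∑_{i=1}^n z_i = 0. Set p_r = ∑_i z_i^r. Then the (n-4)-th derivative of the polynomial ∏_{i=1}^n (X - z_i) in ℝ[X] equals (n!/24) · X^4 - ((n-2)!/4) · p_2 · X^2 - ((n-3)!/3) · p_3 · X + (n-4)! · (p_2^2/8 - p_4/4). -/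
open Finset Polynomial

theorem terminal_quartic_polynomial
    (n : ℕ) (hn : 4 ≤ n) (z : Fin n → ℝ) (hz : ∑ i, z i = 0)
    (p₂ p₃ p₄ : ℝ)
    (hp₂ : p₂ = ∑ i, z i ^ 2) (hp₃ : p₃ = ∑ i, z i ^ 3) (hp₄ : p₄ = ∑ i, z i ^ 4) :
    derivative^[n - 4] (∏ i, (X - C (z i)))
      = C ((n.factorial : ℝ) / 24) * X ^ 4
        - C (((n - 2).factorial : ℝ) / 4 * p₂) * X ^ 2
        - C (((n - 3).factorial : ℝ) / 3 * p₃) * X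
        + C (((n - 4).factorial : ℝ) * (p₂ ^ 2 / 8 - p₄ / 4)) := by
  obtain ⟨k, rfl⟩ : ∃ k, n = k + 4 := ⟨n - 4, by omega⟩
  set s : Multiset ℝ := Finset.univ.val.map z with hs
  have hcard : Multiset.card s = k + 4 := by simp [hs]
  -- Newton's identities evaluated at z
  have hP : ∀ m : ℕ, (MvPolynomial.aeval z) (MvPolynomial.psum (Fin (k + 4)) ℝ m)
      = ∑ i, z i ^ m := by
    intro m
    simp [MvPolynomial.psum, map_sum]
  have hE : ∀ m : ℕ, (MvPolynomial.aeval z) (MvPolynomial.esymm (Fin (k + 4)) ℝ m)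
      = s.esymm m := by
    intro m
    rw [MvPolynomial.aeval_esymm_eq_multiset_esymm]
  have hE0 : s.esymm 0 = 1 := by simp [Multiset.esymm]
  have newton : ∀ m : ℕ, (m : ℝ) * s.esymm m = (-1) ^ (m + 1) *
      ∑ a ∈ Finset.HasAntidiagonal.antidiagonal m with a.1 < m,
        (-1) ^ a.1 * s.esymm a.1 * ∑ i, z i ^ a.2 := by
    intro m
    have h := congrArg (MvPolynomial.aeval z)
      (MvPolynomial.mul_esymm_eq_sum (Fin (k + 4)) ℝ m)
    simp only [MvPolynomial.aeval_eq_eval] at hE hP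
    simpa [map_sum, hE, hP] using h
  have h1 := newton 1
  have h2 := newton 2
  have h3 := newton 3
  have h4 := newton 4
  simp only [Finset.sum_filter, Finset.Nat.sum_antidiagonal_eq_sum_range_succ_mk,
    Finset.sum_range_succ, Finset.sum_range_zero] at h1 h2 h3 h4
  norm_num [hE0, hz] at h1 h2 h3 h4
  -- h1 : s.esymm 1 = 0, etc.
  have hE1 : s.esymm 1 = 0 := h1
  have hE2 : s.esymm 2 = -p₂ / 2 := by rw [hp₂]; linarith
  rw [← hp₂, ← hp₃] at h3
  rw [← hp₂, ← hp₃, ← hp₄] at h4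
  rw [hE1, zero_mul] at h3 h4
  rw [hE2] at h4
  have hE3 : s.esymm 3 = p₃ / 3 := by linear_combination h3 / 3
  have hE4 : s.esymm 4 = p₂ ^ 2 / 8 - p₄ / 4 := by linear_combination h4 / 4
  -- Coefficients of the product
  have hprod : (∏ i, (X - C (z i))) = (s.map fun t => X - C t).prod := by
    rw [hs, Finset.prod_eq_multiset_prod, Multiset.map_map]
    rfl
  have hdeg : (∏ i, (X - C (z i))).natDegree = k + 4 := by
    rw [hprod, Polynomial.natDegree_multiset_prod_X_sub_C_eq_card, hcard]
  have hcoeff : ∀ j : ℕ, j ≤ k + 4 → (∏ i, (X - C (z i))).coeff j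
      = (-1) ^ (k + 4 - j) * s.esymm (k + 4 - j) := by
    intro j hj
    rw [hprod, Multiset.prod_X_sub_C_coeff s (hcard ▸ hj), hcard]
  have hfac : ∀ m : ℕ, ((m + k).descFactorial k : ℝ) * (m.factorial : ℝ)
      = ((m + k).factorial : ℝ) := by
    intro m
    have := Nat.factorial_mul_descFactorial (show k ≤ m + k by omega)
    have h' : m + k - k = m := by omega
    rw [h'] at this
    exact_mod_cast congrArg (Nat.cast (R := ℝ)) (by rw [← this]; ring)
  have hksub : k + 4 - 4 = k := by omega
  rw [hksub]
  ext m
  rw [Polynomial.coeff_iterate_derivative, nsmul_eq_mul]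
  match m with
  | 0 =>
    have hc := hcoeff (0 + k) (by omega)
    have h4m : k + 4 - (0 + k) = 4 := by omega
    rw [h4m] at hc
    have hf := hfac 0
    simp only [Nat.factorial_zero, Nat.cast_one, mul_one] at hf
    rw [hc, hE4, hf]
    have hk4 : (0 : ℕ) + k = k := by omega
    simp only [coeff_add, coeff_sub, coeff_C_mul, coeff_X_pow, coeff_C, coeff_X_zero]
    norm_num
  | 1 =>
    have hc := hcoeff (1 + k) (by omega)
    have h4m : k + 4 - (1 + k) = 3 := by omega
    rw [h4m] at hc
    have hf := hfac 1
    simp only [Nat.factorial_one, Nat.cast_one, mul_one] at hf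
    rw [hc, hE3, hf]
    simp only [coeff_add, coeff_sub, coeff_C_mul, coeff_X_pow, coeff_C, coeff_X]
    norm_num
    rw [show k + 4 - 3 = k + 1 by omega, show 1 + k = k + 1 by omega]
    ring
  | 2 =>
    have hc := hcoeff (2 + k) (by omega)
    have h4m : k + 4 - (2 + k) = 2 := by omega
    rw [h4m] at hc
    have hf := hfac 2
    rw [hc, hE2]
    simp only [coeff_add, coeff_sub, coeff_C_mul, coeff_X_pow, coeff_C, coeff_X]
    norm_num
    rw [show k + 4 - 2 = k + 2 by omega, show 2 + k = k + 2 by omega]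
    have : ((k + 2).descFactorial k : ℝ) = ((k + 2).factorial : ℝ) / 2 := by
      have := hfac 2
      rw [show (2 : ℕ) + k = k + 2 by omega] at this
      have h2 : ((2 : ℕ).factorial : ℝ) = 2 := by norm_num [Nat.factorial]
      rw [h2] at this
      linarith
    rw [this]
    ring
  | 3 =>
    have hc := hcoeff (3 + k) (by omega)
    have h4m : k + 4 - (3 + k) = 1 := by omega
    rw [h4m] at hc
    rw [hc, hE1]
    simp only [coeff_add, coeff_sub, coeff_C_mul, coeff_X_pow, coeff_C, coeff_X]
    norm_num
  | 4 =>
    have hc := hcoeff (4 + k) (by omega)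
    have h4m : k + 4 - (4 + k) = 0 := by omega
    rw [h4m] at hc
    rw [hc, hE0]
    simp only [coeff_add, coeff_sub, coeff_C_mul, coeff_X_pow, coeff_C, coeff_X]
    norm_num
    have : ((4 + k).descFactorial k : ℝ) = ((k + 4).factorial : ℝ) / 24 := by
      have := hfac 4
      have h24 : ((4 : ℕ).factorial : ℝ) = 24 := by norm_num [Nat.factorial]
      rw [show (4 : ℕ) + k = k + 4 by omega] at this ⊢
      rw [h24] at this
      linarith
    rw [this]
  | (m + 5) =>
    have hzc : (∏ i, (X - C (z i))).coeff (m + 5 + k) = 0 := by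
      apply Polynomial.coeff_eq_zero_of_natDegree_lt
      omega
    rw [hzc, mul_zero]
    simp only [coeff_add, coeff_sub, coeff_C_mul, coeff_X_pow, coeff_C, coeff_X]
    norm_num
    rw [if_neg (by omega), if_neg (by omega)]
    ring
end

section
/- Let 2 ≤ r ≤ n and let z_1, …, z_n be real numbers with ∑_{i=1}^n z_i = 0. Let e_j denote the j-th elementary symmetric polynomial of z_1, …, z_n (so e_1 = 0). Then (r!/n!) times the (n-r)-th iterated derivative of ∏_{i=1}^n (X - z_i) in ℝ[X] equals X^r + ∑_{j=2}^r (-1)^j · ((r(r-1)⋯(r-j+1)) / (n(n-1)⋯(n-j+1))) · e_j · X^{r-j}. -/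
open Finset Polynomial

lemma ntp_nat_key (n r j : ℕ) (hj : j ≤ r) (hrn : r ≤ n) :
    r.factorial * ((n-j).descFactorial (n-r)) * (n.descFactorial j) = (r.descFactorial j) * n.factorial := by
  have hjn : j ≤ n := hj.trans hrn
  apply Nat.eq_of_mul_eq_mul_left (Nat.factorial_pos (r - j))
  have h1 : (r-j).factorial * r.descFactorial j = r.factorial := Nat.factorial_mul_descFactorial hj
  have h2 : (n-j).factorial * n.descFactorial j = n.factorial := Nat.factorial_mul_descFactorial hjn
  have h3 : (r-j).factorial * (n-j).descFactorial (n-r) = (n-j).factorial := by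
    have heq : (n-j) - (n-r) = r - j := by omega
    have h := Nat.factorial_mul_descFactorial (n := n - j) (k := n - r) (by omega)
    rwa [heq] at h
  calc (r-j).factorial * (r.factorial * ((n-j).descFactorial (n-r)) * (n.descFactorial j))
      = r.factorial * (((r-j).factorial * (n-j).descFactorial (n-r)) * n.descFactorial j) := by ring
    _ = r.factorial * ((n-j).factorial * n.descFactorial j) := by rw [h3]
    _ = r.factorial * n.factorial := by rw [h2]
    _ = (r-j).factorial * (r.descFactorial j * n.factorial) := by rw [← h1]; ring

theorem normalized_terminal_polynomial
    (n r : ℕ) (hr : 2 ≤ r) (hrn : r ≤ n) (z : Fin n → ℝ) (hz : ∑ i, z i = 0)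
    (e : ℕ → ℝ)
    (he : ∀ j, e j = ∑ t ∈ Finset.univ.powersetCard j, ∏ i ∈ t, z i) :
    C ((r.factorial : ℝ) / (n.factorial : ℝ)) * derivative^[n - r] (∏ i, (X - C (z i)))
      = X ^ r + ∑ j ∈ Finset.Icc 2 r,
          C ((-1 : ℝ) ^ j * ((r.descFactorial j : ℝ) / (n.descFactorial j : ℝ)) * e j)
            * X ^ (r - j) := by
  have hesymm : ∀ j, (Multiset.map z Finset.univ.val).esymm j = e j := fun j => by
    rw [Finset.esymm_map_val, he]
  have hcard : Multiset.card (Multiset.map z Finset.univ.val) = n := by simp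
  have hprod : (∏ i, (X - C (z i))) =
      ∑ j ∈ range (n+1), (-1:ℝ[X]) ^ j * (C (e j) * X ^ (n - j)) := by
    have h := Multiset.prod_X_sub_X_eq_sum_esymm (Multiset.map z Finset.univ.val)
    rw [hcard] at h
    simp only [hesymm] at h
    rw [← h, Multiset.map_map]
    rfl
  rw [hprod, Polynomial.iterate_derivative_sum, Finset.mul_sum]
  have hterm : ∀ j ∈ range (n+1),
      C ((r.factorial : ℝ) / (n.factorial : ℝ)) *
        derivative^[n - r] ((-1:ℝ[X]) ^ j * (C (e j) * X ^ (n - j)))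
      = C ((-1:ℝ)^j * ((r.descFactorial j : ℝ) / (n.descFactorial j : ℝ)) * e j)
          * X ^ (n - j - (n - r)) := by
    intro j hj
    have h1 : ((-1:ℝ[X]) ^ j * (C (e j) * X ^ (n - j))) = C ((-1:ℝ)^j * e j) * X ^ (n-j) := by
      rw [map_mul, map_pow, map_neg, map_one]; ring
    rw [h1, Polynomial.iterate_derivative_C_mul, Polynomial.iterate_derivative_X_pow_eq_C_mul,
      ← mul_assoc, ← mul_assoc, ← map_mul, ← map_mul]
    congr 2
    rcases le_or_gt j r with hjr | hjr
    · have hnd : (n.descFactorial j : ℝ) ≠ 0 := by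
        rw [Ne, Nat.cast_eq_zero, Nat.descFactorial_eq_zero_iff_lt]
        omega
      have hnf : ((n.factorial : ℝ)) ≠ 0 := by positivity
      have keyR : (r.factorial:ℝ) * ((n-j).descFactorial (n-r)) * (n.descFactorial j)
          = (r.descFactorial j) * n.factorial := by
        exact_mod_cast ntp_nat_key n r j hjr hrn
      field_simp
      ring_nf
      ring_nf at keyR
      linear_combination (e j) * keyR
    · have : (n-j).descFactorial (n-r) = 0 := by
        rw [Nat.descFactorial_eq_zero_iff_lt]
        simp only [Finset.mem_range] at hj
        omega
      rw [this]
      have : r.descFactorial j = 0 := by rwa [Nat.descFactorial_eq_zero_iff_lt]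
      rw [this]
      push_cast
      ring
  rw [Finset.sum_congr rfl hterm]
  -- restrict to range (r+1)
  have hsub : ∑ j ∈ range (n+1),
      C ((-1:ℝ)^j * ((r.descFactorial j : ℝ) / (n.descFactorial j : ℝ)) * e j) * X ^ (n - j - (n - r))
      = ∑ j ∈ range (r+1),
      C ((-1:ℝ)^j * ((r.descFactorial j : ℝ) / (n.descFactorial j : ℝ)) * e j) * X ^ (r - j) := by
    have h0 : ∑ j ∈ range (n+1),
        C ((-1:ℝ)^j * ((r.descFactorial j : ℝ) / (n.descFactorial j : ℝ)) * e j) * X ^ (n - j - (n - r))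
        = ∑ j ∈ range (r+1),
        C ((-1:ℝ)^j * ((r.descFactorial j : ℝ) / (n.descFactorial j : ℝ)) * e j) * X ^ (n - j - (n - r)) := by
      refine (Finset.sum_subset (Finset.range_subset_range.mpr (by omega)) ?_).symm
      intro j hj1 hj2
      simp only [Finset.mem_range] at hj1 hj2
      have : r.descFactorial j = 0 := by rw [Nat.descFactorial_eq_zero_iff_lt]; omega
      rw [this]
      push_cast
      simp
    rw [h0]
    apply Finset.sum_congr rfl
    intro j hj
    simp only [Finset.mem_range] at hj
    rw [show n - j - (n - r) = r - j by omega]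
  rw [hsub]
  have hsplit : range (r+1) = Finset.Ico 0 2 ∪ Finset.Icc 2 r := by
    rw [Finset.range_eq_Ico, ← Finset.Ico_add_one_right_eq_Icc]
    rw [Finset.Ico_union_Ico_eq_Ico (by omega) (by omega)]
  rw [hsplit, Finset.sum_union (by
    simp only [Finset.disjoint_left, Finset.mem_Ico, Finset.mem_Icc]
    omega)]
  congr 1
  -- the j=0,1 part equals X^r
  have he0 : e 0 = 1 := by simp [he]
  have he1 : e 1 = 0 := by
    rw [he, Finset.powersetCard_one]
    simpa [Finset.sum_map] using hz
  rw [show Finset.Ico 0 2 = {0, 1} by decide]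
  rw [Finset.sum_insert (by decide), Finset.sum_singleton]
  simp [he0, he1]
end

section
/- Let n ≥ 5 and let z_1, …, z_n be real numbers with ∑_{i=1}^n z_i = 0. Set p_r = ∑_i z_i^r. Then (120/n!) times the (n-5)-th iterated derivative of ∏_{i=1}^n (X - z_i) in ℝ[X] equals X^5 - (10 p_2/(n(n-1))) X^3 - (20 p_3/(n(n-1)(n-2))) X^2 + ((15 p_2^2 - 30 p_4)/(n(n-1)(n-2)(n-3))) X + ((20 p_2 p_3 - 24 p_5)/(n(n-1)(n-2)(n-3)(n-4))). -/
open Finset Polynomial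
set_option maxHeartbeats 1000000

private noncomputable def Ee {n : ℕ} (z : Fin n → ℝ) (k : ℕ) : ℝ :=
  (Finset.univ.val.map z).esymm k

private noncomputable def Pp {n : ℕ} (z : Fin n → ℝ) (r : ℕ) : ℝ := ∑ i, z i ^ r

private lemma newton {n : ℕ} (z : Fin n → ℝ) (k : ℕ) :
    (k:ℝ) * Ee z k = (-1)^(k+1) *
      ∑ a ∈ Finset.HasAntidiagonal.antidiagonal k with a.1 < k,
        (-1)^a.1 * Ee z a.1 * Pp z a.2 := by
  have := congrArg (MvPolynomial.aeval z) (MvPolynomial.mul_esymm_eq_sum (Fin n) ℝ k)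
  simp only [map_mul, map_sum, MvPolynomial.aeval_esymm_eq_multiset_esymm] at this
  simpa [Ee, Pp, MvPolynomial.psum, MvPolynomial.aeval_esymm_eq_multiset_esymm, map_sum] using this

private lemma Ee0 {n : ℕ} (z : Fin n → ℝ) : Ee z 0 = 1 := by simp [Ee, Multiset.esymm]

section
variable {n : ℕ} (z : Fin n → ℝ) (hz : ∑ i, z i = 0)
include hz

private lemma Pp1 : Pp z 1 = 0 := by simpa [Pp] using hz

private lemma Ee1 : Ee z 1 = 0 := by
  have h := newton z 1
  have hs : (Finset.HasAntidiagonal.antidiagonal 1).filter (fun a => a.1 < 1) = {(0,1)} := by decide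
  rw [hs] at h
  simp [Ee0, Pp1 z hz] at h
  simpa using h

private lemma Ee2 : Ee z 2 = -Pp z 2 / 2 := by
  have h := newton z 2
  have hs : (Finset.HasAntidiagonal.antidiagonal 2).filter (fun a => a.1 < 2) = {(0,2),(1,1)} := by decide
  rw [hs] at h
  simp [Ee0, Ee1 z hz, Pp1 z hz] at h
  linarith

private lemma Ee3 : Ee z 3 = Pp z 3 / 3 := by
  have h := newton z 3
  have hs : (Finset.HasAntidiagonal.antidiagonal 3).filter (fun a => a.1 < 3) = {(0,3),(1,2),(2,1)} := by decide
  rw [hs] at h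
  simp [Ee0, Ee1 z hz, Pp1 z hz, Finset.sum_insert] at h
  linarith

private lemma Ee4 : Ee z 4 = (Pp z 2 ^ 2 / 2 - Pp z 4) / 4 := by
  have h := newton z 4
  have hs : (Finset.HasAntidiagonal.antidiagonal 4).filter (fun a => a.1 < 4) = {(0,4),(1,3),(2,2),(3,1)} := by decide
  rw [hs] at h
  simp [Ee0, Ee1 z hz, Ee2 z hz, Pp1 z hz] at h
  field_simp at h ⊢
  linarith

private lemma Ee5 : Ee z 5 = Pp z 5 / 5 - Pp z 2 * Pp z 3 / 6 := by
  have h := newton z 5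
  have hs : (Finset.HasAntidiagonal.antidiagonal 5).filter (fun a => a.1 < 5) = {(0,5),(1,4),(2,3),(3,2),(4,1)} := by decide
  rw [hs] at h
  simp [Ee0, Ee1 z hz, Ee2 z hz, Ee3 z hz, Pp1 z hz] at h
  field_simp at h ⊢
  linarith

end

private lemma coeff_prodXsubC {n : ℕ} (z : Fin n → ℝ) {j : ℕ} (hj : j ≤ n) :
    (∏ i, (X - C (z i))).coeff j = (-1)^(n-j) * Ee z (n-j) := by
  have hprod : ∏ i, (X - C (z i)) = ((Finset.univ.val.map z).map (fun t => X - C t)).prod := by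
    rw [Multiset.map_map]; rfl
  have hcard : Multiset.card (Finset.univ.val.map z) = n := by simp
  rw [hprod, Multiset.prod_X_sub_C_coeff _ (by rwa [hcard]), hcard, Ee]

private lemma natDegree_prodXsubC {n : ℕ} (z : Fin n → ℝ) :
    (∏ i, (X - C (z i))).natDegree = n := by
  rw [Polynomial.natDegree_prod_of_monic _ _ (fun i _ => monic_X_sub_C _)]
  simp

theorem quintic_terminal_polynomial
    (n : ℕ) (hn : 5 ≤ n) (z : Fin n → ℝ) (hz : ∑ i, z i = 0)
    (p₂ p₃ p₄ p₅ : ℝ)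
    (hp₂ : p₂ = ∑ i, z i ^ 2) (hp₃ : p₃ = ∑ i, z i ^ 3)
    (hp₄ : p₄ = ∑ i, z i ^ 4) (hp₅ : p₅ = ∑ i, z i ^ 5) :
    C (120 / (n.factorial : ℝ)) * derivative^[n - 5] (∏ i, (X - C (z i)))
      = X ^ 5
        - C (10 * p₂ / ((n : ℝ) * ((n : ℝ) - 1))) * X ^ 3
        - C (20 * p₃ / ((n : ℝ) * ((n : ℝ) - 1) * ((n : ℝ) - 2))) * X ^ 2
        + C ((15 * p₂ ^ 2 - 30 * p₄) / ((n : ℝ) * ((n : ℝ) - 1) * ((n : ℝ) - 2) * ((n : ℝ) - 3))) * X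
        + C ((20 * p₂ * p₃ - 24 * p₅) /
            ((n : ℝ) * ((n : ℝ) - 1) * ((n : ℝ) - 2) * ((n : ℝ) - 3) * ((n : ℝ) - 4))) := by
  obtain ⟨k, rfl⟩ : ∃ k, n = k + 5 := ⟨n - 5, by omega⟩
  have hsub : k + 5 - 5 = k := by omega
  rw [hsub]
  have hp2 : Pp z 2 = p₂ := hp₂.symm
  have hp3 : Pp z 3 = p₃ := hp₃.symm
  have hp4 : Pp z 4 = p₄ := hp₄.symm
  have hp5 : Pp z 5 = p₅ := hp₅.symm
  have hkf : (k.factorial : ℝ) ≠ 0 := Nat.cast_ne_zero.mpr k.factorial_ne_zero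
  have h1 : (k:ℝ) + 1 ≠ 0 := by positivity
  have h2 : (k:ℝ) + 2 ≠ 0 := by positivity
  have h3 : (k:ℝ) + 3 ≠ 0 := by positivity
  have h4 : (k:ℝ) + 4 ≠ 0 := by positivity
  have h5 : (k:ℝ) + 5 ≠ 0 := by positivity
  have hfac5 : ((k+5).factorial : ℝ)
      = ((k:ℝ)+5)*((k:ℝ)+4)*((k:ℝ)+3)*((k:ℝ)+2)*((k:ℝ)+1)*(k.factorial:ℝ) := by
    simp [Nat.factorial_succ]; push_cast; ring
  have hD : ∀ m : ℕ, (m.factorial : ℝ) * ((m+k).descFactorial k : ℝ) = ((m+k).factorial : ℝ) := by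
    intro m
    exact_mod_cast congrArg (Nat.cast : ℕ → ℝ)
      (by simpa using Nat.factorial_mul_descFactorial (Nat.le_add_left k m))
  have hfm : ∀ m : ℕ, ((m+1+k).factorial : ℝ) = ((k:ℝ)+(m:ℝ)+1) * ((m+k).factorial : ℝ) := by
    intro m
    rw [show m+1+k = (m+k)+1 from by ring, Nat.factorial_succ]
    push_cast; ring
  have hf0 : ((0+k).factorial : ℝ) = (k.factorial : ℝ) := by norm_num
  have hf1 : ((1+k).factorial : ℝ) = ((k:ℝ)+1) * (k.factorial : ℝ) := by
    rw [hfm 0, hf0]; norm_num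
  have hf2 : ((2+k).factorial : ℝ) = ((k:ℝ)+2)*((k:ℝ)+1) * (k.factorial : ℝ) := by
    rw [hfm 1, hf1]; ring
  have hf3 : ((3+k).factorial : ℝ) = ((k:ℝ)+3)*((k:ℝ)+2)*((k:ℝ)+1) * (k.factorial : ℝ) := by
    rw [hfm 2, hf2]; ring
  have hf4 : ((4+k).factorial : ℝ) = ((k:ℝ)+4)*((k:ℝ)+3)*((k:ℝ)+2)*((k:ℝ)+1) * (k.factorial : ℝ) := by
    rw [hfm 3, hf3]; ring
  have hf5 : ((5+k).factorial : ℝ) = ((k:ℝ)+5)*((k:ℝ)+4)*((k:ℝ)+3)*((k:ℝ)+2)*((k:ℝ)+1) * (k.factorial : ℝ) := by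
    rw [hfm 4, hf4]; ring
  apply Polynomial.ext
  intro m
  rw [Polynomial.coeff_C_mul, Polynomial.coeff_iterate_derivative, nsmul_eq_mul]
  match m with
  | 0 =>
    have hc := coeff_prodXsubC z (show 0 + k ≤ k + 5 by omega)
    rw [show (k+5) - (0+k) = 5 from by omega] at hc
    rw [hc, Ee5 z hz, hp2, hp3, hp5]
    have hd := hD 0
    rw [hf0] at hd
    norm_num [Nat.factorial] at hd
    simp [coeff_X_pow, coeff_C]
    rw [hd, hfac5]
    try rw [show (k:ℝ)+5-1 = (k:ℝ)+4 from by ring]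
    try rw [show (k:ℝ)+5-2 = (k:ℝ)+3 from by ring]
    try rw [show (k:ℝ)+5-3 = (k:ℝ)+2 from by ring]
    try rw [show (k:ℝ)+5-4 = (k:ℝ)+1 from by ring]
    field_simp
    ring
  | 1 =>
    have hc := coeff_prodXsubC z (show 1 + k ≤ k + 5 by omega)
    rw [show (k+5) - (1+k) = 4 from by omega] at hc
    rw [hc, Ee4 z hz, hp2, hp4]
    have hd := hD 1
    rw [hf1] at hd
    norm_num [Nat.factorial] at hd
    simp [coeff_X_pow, coeff_C]
    have hdval : ((1+k).descFactorial k : ℝ) = ((k:ℝ)+1) * (k.factorial : ℝ) := by linarith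
    rw [hdval, hfac5]
    try rw [show (k:ℝ)+5-1 = (k:ℝ)+4 from by ring]
    try rw [show (k:ℝ)+5-2 = (k:ℝ)+3 from by ring]
    try rw [show (k:ℝ)+5-3 = (k:ℝ)+2 from by ring]
    try rw [show (k:ℝ)+5-4 = (k:ℝ)+1 from by ring]
    field_simp
    ring
  | 2 =>
    have hc := coeff_prodXsubC z (show 2 + k ≤ k + 5 by omega)
    rw [show (k+5) - (2+k) = 3 from by omega] at hc
    rw [hc, Ee3 z hz, hp3]
    have hd := hD 2
    rw [hf2] at hd
    norm_num [Nat.factorial] at hd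
    simp [coeff_X_pow, coeff_C]
    have hdval : ((2+k).descFactorial k : ℝ) = ((k:ℝ)+2)*((k:ℝ)+1) * (k.factorial : ℝ) / 2 := by
      linarith
    rw [hdval, hfac5]
    try rw [show (k:ℝ)+5-1 = (k:ℝ)+4 from by ring]
    try rw [show (k:ℝ)+5-2 = (k:ℝ)+3 from by ring]
    try rw [show (k:ℝ)+5-3 = (k:ℝ)+2 from by ring]
    try rw [show (k:ℝ)+5-4 = (k:ℝ)+1 from by ring]
    field_simp
    ring
  | 3 =>
    have hc := coeff_prodXsubC z (show 3 + k ≤ k + 5 by omega)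
    rw [show (k+5) - (3+k) = 2 from by omega] at hc
    rw [hc, Ee2 z hz, hp2]
    have hd := hD 3
    rw [hf3] at hd
    norm_num [Nat.factorial] at hd
    simp [coeff_X_pow, coeff_C]
    have hdval : ((3+k).descFactorial k : ℝ) = ((k:ℝ)+3)*((k:ℝ)+2)*((k:ℝ)+1) * (k.factorial : ℝ) / 6 := by
      linarith
    rw [hdval, hfac5]
    try rw [show (k:ℝ)+5-1 = (k:ℝ)+4 from by ring]
    try rw [show (k:ℝ)+5-2 = (k:ℝ)+3 from by ring]
    try rw [show (k:ℝ)+5-3 = (k:ℝ)+2 from by ring]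
    try rw [show (k:ℝ)+5-4 = (k:ℝ)+1 from by ring]
    field_simp
    ring
  | 4 =>
    have hc := coeff_prodXsubC z (show 4 + k ≤ k + 5 by omega)
    rw [show (k+5) - (4+k) = 1 from by omega] at hc
    rw [hc, Ee1 z hz]
    simp [coeff_X_pow, coeff_C]
  | 5 =>
    have hc := coeff_prodXsubC z (show 5 + k ≤ k + 5 by omega)
    rw [show (k+5) - (5+k) = 0 from by omega] at hc
    rw [hc, Ee0]
    have hd := hD 5
    rw [hf5] at hd
    norm_num [Nat.factorial] at hd
    simp [coeff_X_pow, coeff_C]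
    have hdval : ((5+k).descFactorial k : ℝ)
        = ((k:ℝ)+5)*((k:ℝ)+4)*((k:ℝ)+3)*((k:ℝ)+2)*((k:ℝ)+1) * (k.factorial : ℝ) / 120 := by
      linarith
    rw [hdval, hfac5]
    field_simp
  | (m+6) =>
    have hz0 : (∏ i, (X - C (z i))).coeff (m + 6 + k) = 0 := by
      apply Polynomial.coeff_eq_zero_of_natDegree_lt
      rw [natDegree_prodXsubC]
      omega
    rw [hz0]
    simp [coeff_X_pow, coeff_C]
    try omega
end

section
/- Let n ≥ 3 and let z_1, …, z_n be real numbers with ∑_{i=1}^n z_i = 0. Set p_r = ∑_i z_i^r. Then ∑_{1 ≤ i < j < k ≤ n} (z_i - z_j)^2 (z_j - z_k)^2 (z_k - z_i)^2 = -p_2^3 - n·p_3^2 + n·p_2·p_4. -/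
/-!
The summand is symmetric in `(i, j, k)` and vanishes when two indices coincide, so the sum over
all triples is six times the sum over `i < j < k`. The full sum is computed one index at a time:
with the other two fixed, the summand is a quartic polynomial in the remaining variable, whose sum
is a combination of `p₄, p₃, p₂` and `n`, the linear term dropping out because `p₁ = 0`.
-/

open Finset

section OrderedTriples

variable {ι M : Type*} [Fintype ι] [LinearOrder ι] [AddCommMonoid M]

theorem sum_sum_sum_eq_six_smul_sum_lt_lt {f : ι → ι → ι → M}
    (h₁₂ : ∀ i j k, f i j k = f j i k) (h₂₃ : ∀ i j k, f i j k = f i k j)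
    (hdiag : ∀ i k, f i i k = 0) :
    ∑ i, ∑ j, ∑ k, f i j k = 6 • ∑ i, ∑ j, ∑ k, if i < j ∧ j < k then f i j k else 0 := by
  let g i j k : M := if i < j ∧ j < k then f i j k else 0
  have split (i j k : ι) :
      f i j k = g i j k + g i k j + g j i k + g j k i + g k i j + g k j i := by
    grind
  have swap₂₃ (F : ι → ι → ι → M) : ∑ i, ∑ j, ∑ k, F i k j = ∑ i, ∑ j, ∑ k, F i j k :=
    sum_congr rfl fun _ _ => sum_comm
  have swap₁₂ (F : ι → ι → ι → M) : ∑ i, ∑ j, ∑ k, F j i k = ∑ i, ∑ j, ∑ k, F i j k :=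
    sum_comm
  change _ = 6 • ∑ i, ∑ j, ∑ k, g i j k
  simp only [split, sum_add_distrib]
  rw [swap₂₃ g, swap₁₂ g, swap₁₂ (fun i j k => g i k j), swap₂₃ g,
    swap₂₃ (fun i j k => g j i k), swap₁₂ g, swap₂₃ (fun i j k => g j k i),
    swap₁₂ (fun i j k => g i k j), swap₂₃ g]
  abel

end OrderedTriples

section PowerSums

variable {ι R : Type*} [Fintype ι] [CommRing R] {z : ι → R}

theorem sum_quartic_of_sum_eq_zero (hz : ∑ i, z i = 0) (a b c d e : R) :
    ∑ i, (a * z i ^ 4 + b * z i ^ 3 + c * z i ^ 2 + d * z i + e)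
      = a * ∑ i, z i ^ 4 + b * ∑ i, z i ^ 3 + c * ∑ i, z i ^ 2 + Fintype.card ι * e := by
  simp only [sum_add_distrib, ← mul_sum, hz, sum_const, card_univ, nsmul_eq_mul]
  ring

theorem sum_sum_sum_sq_sub_mul_sq_sub_mul_sq_sub (hz : ∑ i, z i = 0) :
    ∑ i, ∑ j, ∑ k, (z i - z j) ^ 2 * (z j - z k) ^ 2 * (z k - z i) ^ 2
      = 6 * (-(∑ i, z i ^ 2) ^ 3 - Fintype.card ι * (∑ i, z i ^ 3) ^ 2
        + Fintype.card ι * (∑ i, z i ^ 2) * ∑ i, z i ^ 4) := by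
  set n : R := (Fintype.card ι : R)
  set p₂ := ∑ i, z i ^ 2
  set p₃ := ∑ i, z i ^ 3
  set p₄ := ∑ i, z i ^ 4
  -- `(y - w) ^ 2 * (w - x) ^ 2 = (w ^ 2 - (x + y) * w + x * y) ^ 2`
  have sum_k (x y : R) : ∑ k, (x - y) ^ 2 * (y - z k) ^ 2 * (z k - x) ^ 2
      = (x - y) ^ 2 *
          (p₄ - 2 * (x + y) * p₃ + ((x + y) ^ 2 + 2 * x * y) * p₂ + n * (x * y) ^ 2) :=
    (sum_congr rfl fun k _ => by ring).trans <| (sum_quartic_of_sum_eq_zero hz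
      ((x - y) ^ 2) (-2 * (x + y) * (x - y) ^ 2) (((x + y) ^ 2 + 2 * x * y) * (x - y) ^ 2)
      (-2 * (x + y) * x * y * (x - y) ^ 2) ((x * y) ^ 2 * (x - y) ^ 2)).trans (by ring)
  have sum_jk (x : R) : ∑ j, ∑ k, (x - z j) ^ 2 * (z j - z k) ^ 2 * (z k - x) ^ 2
      = 2 * n * p₂ * x ^ 4 - 4 * n * p₃ * x ^ 3 + (2 * n * p₄ - 6 * p₂ ^ 2) * x ^ 2
        + 4 * p₂ * p₃ * x + 2 * (p₂ * p₄ - p₃ ^ 2) := by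
    simp only [sum_k]
    refine (sum_congr rfl fun j _ => by ring).trans <| (sum_quartic_of_sum_eq_zero hz
      (p₂ + n * x ^ 2) (-2 * p₃ + 2 * x * p₂ - 2 * n * x ^ 3)
      (p₄ + 2 * x * p₃ - 6 * x ^ 2 * p₂ + n * x ^ 4) (-2 * x * p₄ + 2 * x ^ 2 * p₃ + 2 * x ^ 3 * p₂)
      (x ^ 2 * p₄ - 2 * x ^ 3 * p₃ + x ^ 4 * p₂)).trans (by ring)
  simp only [sum_jk]
  exact (sum_congr rfl fun i _ => by ring).trans <| (sum_quartic_of_sum_eq_zero hz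
    (2 * n * p₂) (-4 * n * p₃) (2 * n * p₄ - 6 * p₂ ^ 2) (4 * p₂ * p₃)
    (2 * (p₂ * p₄ - p₃ ^ 2))).trans (by ring)

end PowerSums

theorem triangle_square_graph_sum_general
    (n : ℕ) (z : Fin n → ℝ) (hz : ∑ i, z i = 0)
    (p₂ p₃ p₄ : ℝ)
    (hp₂ : p₂ = ∑ i, z i ^ 2) (hp₃ : p₃ = ∑ i, z i ^ 3) (hp₄ : p₄ = ∑ i, z i ^ 4) :
    (∑ i : Fin n, ∑ j : Fin n, ∑ k : Fin n,
        if i < j ∧ j < k then (z i - z j) ^ 2 * (z j - z k) ^ 2 * (z k - z i) ^ 2 else 0)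
      = -p₂ ^ 3 - (n : ℝ) * p₃ ^ 2 + (n : ℝ) * p₂ * p₄ := by
  have h := sum_sum_sum_eq_six_smul_sum_lt_lt
    (f := fun i j k => (z i - z j) ^ 2 * (z j - z k) ^ 2 * (z k - z i) ^ 2)
    (fun _ _ _ => by ring) (fun _ _ _ => by ring) (fun _ _ => by ring)
  rw [sum_sum_sum_sq_sub_mul_sq_sub_mul_sq_sub hz, Fintype.card_fin, nsmul_eq_mul,
    Nat.cast_ofNat] at h
  subst hp₂ hp₃ hp₄
  linarith

theorem triangle_square_graph_sum
    (n : ℕ) (hn : 3 ≤ n) (z : Fin n → ℝ) (hz : ∑ i, z i = 0)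
    (p₂ p₃ p₄ : ℝ)
    (hp₂ : p₂ = ∑ i, z i ^ 2) (hp₃ : p₃ = ∑ i, z i ^ 3) (hp₄ : p₄ = ∑ i, z i ^ 4) :
    (∑ i : Fin n, ∑ j : Fin n, ∑ k : Fin n,
        if i < j ∧ j < k then (z i - z j) ^ 2 * (z j - z k) ^ 2 * (z k - z i) ^ 2 else 0)
      = -p₂ ^ 3 - (n : ℝ) * p₃ ^ 2 + (n : ℝ) * p₂ * p₄ :=
  triangle_square_graph_sum_general n z hz p₂ p₃ p₄ hp₂ hp₃ hp₄
end

section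
/- Let n ≥ 1 and let z_1, …, z_n be real numbers with ∑_{i=1}^n z_i = 0. Set p_r = ∑_i z_i^r. Then the sum of (z_i - z_j)^2 (z_j - z_k)^2 (z_k - z_l)^2 over all ordered quadruples (i, j, k, l) of pairwise distinct indices in {1, …, n} equals (4n-6)·p_2^3 - 2(n-5)(n-2)·p_3^2 + (4n^2 - 24n + 30)·p_2·p_4 - 2n(n-1)·p_6. -/
/-!
The summand vanishes as soon as two consecutive indices coincide, so among the coincidences
excluded by injectivity only `i = k`, `j = l` and `i = l` matter, and of their intersections only
`i = k ∧ j = l`. Inclusion–exclusion over these writes `P_n` through four unrestricted sums over a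
symmetric zero-diagonal weight: the path, the cherry with a doubled edge (twice), the triangle and
the tripled edge. Unrestricted sums of polynomials in the `z_i` expand into products of power sums,
in which `p_1 = 0` kills every term containing a simple factor.
-/

open Finset

variable {ι R : Type*}

theorem ite_nodup_path_eq_inclusion_exclusion [CommRing R] [DecidableEq ι] (a : ι → ι → R)
    (ha : ∀ i, a i i = 0) (i j k l : ι) :
    (if [i, j, k, l].Nodup then a i j * a j k * a k l else 0) =
      a i j * a j k * a k l - (if k = i then a i j * a j k * a k l else 0)
        - (if l = j then a i j * a j k * a k l else 0) - (if l = i then a i j * a j k * a k l else 0)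
        + (if k = i ∧ l = j then a i j * a j k * a k l else 0) := by
  by_cases hij : i = j
  · subst hij; simp [ha]
  by_cases hjk : j = k
  · subst hjk; simp [ha]
  by_cases hkl : k = l
  · subst hkl; simp [ha]
  by_cases hki : k = i <;> by_cases hlj : l = j <;> by_cases hli : l = i <;> simp_all [eq_comm]

variable [Fintype ι]

theorem sum_fin_four_embedding {M : Type*} [AddCommMonoid M] [DecidableEq ι]
    (g : ι → ι → ι → ι → M) :
    ∑ f : Fin 4 ↪ ι, g (f 0) (f 1) (f 2) (f 3) =
      ∑ i, ∑ j, ∑ k, ∑ l, if [i, j, k, l].Nodup then g i j k l else 0 := by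
  calc ∑ f : Fin 4 ↪ ι, g (f 0) (f 1) (f 2) (f 3)
      = ∑ t : ι × ι × ι × ι with [t.1, t.2.1, t.2.2.1, t.2.2.2].Nodup,
          g t.1 t.2.1 t.2.2.1 t.2.2.2 := by
        refine sum_bij' (fun f _ => (f 0, f 1, f 2, f 3))
          (fun t ht => ⟨![t.1, t.2.1, t.2.2.1, t.2.2.2], ?_⟩) ?_ ?_ ?_ ?_ ?_
        · rw [← List.nodup_ofFn]; exact (mem_filter.mp ht).2
        · intro f _; simp
        · intros; exact mem_univ _
        · intro f _; ext x; fin_cases x <;> rfl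
        · intros; rfl
        · intros; rfl
    _ = _ := by rw [sum_filter]; simp only [Fintype.sum_prod_type]

theorem sum_fin_four_embedding_path [CommRing R] (a : ι → ι → R)
    (ha : ∀ i, a i i = 0) (hsymm : ∀ i j, a i j = a j i) :
    ∑ f : Fin 4 ↪ ι, a (f 0) (f 1) * a (f 1) (f 2) * a (f 2) (f 3) =
      ∑ i, ∑ j, ∑ k, ∑ l, a i j * a j k * a k l - 2 * ∑ i, ∑ j, ∑ k, a i j ^ 2 * a i k
        - ∑ i, ∑ j, ∑ k, a i j * a j k * a k i + ∑ i, ∑ j, a i j ^ 3 := by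
  classical
  rw [sum_fin_four_embedding fun i j k l => a i j * a j k * a k l]
  simp only [ite_nodup_path_eq_inclusion_exclusion a ha, sum_add_distrib, sum_sub_distrib,
    ite_and, sum_ite_irrel, sum_const_zero, sum_ite_eq', mem_univ, if_true]
  have hcherry : ∀ i j k, a i j * a j i * a i k = a i j ^ 2 * a i k := fun i j k => by
    rw [hsymm j i]; ring
  have hcherry' : ∑ i, ∑ j, ∑ k, a i j * a j k * a k j = ∑ i, ∑ j, ∑ k, a i j ^ 2 * a i k := by
    rw [sum_comm]
    refine sum_congr rfl fun j _ => ?_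
    rw [sum_comm]
    refine sum_congr rfl fun k _ => sum_congr rfl fun i _ => ?_
    rw [hsymm i j, hsymm k j]; ring
  simp only [hcherry, hcherry', ← pow_succ]
  ring

section PowerSums

variable [CommRing R] (z : ι → R) (hz : ∑ i, z i = 0)
include hz

theorem sum_sq_sub_path :
    ∑ i, ∑ j, ∑ k, ∑ l, (z i - z j) ^ 2 * (z j - z k) ^ 2 * (z k - z l) ^ 2 =
      4 * Fintype.card ι * (∑ i, z i ^ 2) ^ 3
        + 4 * Fintype.card ι ^ 2 * (∑ i, z i ^ 2) * (∑ i, z i ^ 4)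
        - 2 * Fintype.card ι ^ 2 * (∑ i, z i ^ 3) ^ 2 := by
  ring_nf
  simp only [sum_add_distrib, sum_sub_distrib, sum_neg_distrib, ← sum_mul, ← mul_sum, sum_const,
    card_univ, nsmul_eq_mul, hz]
  ring

theorem sum_sq_sub_cherry :
    ∑ i, ∑ j, ∑ k, (z i - z j) ^ 4 * (z i - z k) ^ 2 =
      6 * (∑ i, z i ^ 2) ^ 3 + 9 * Fintype.card ι * (∑ i, z i ^ 2) * (∑ i, z i ^ 4)
        - 4 * Fintype.card ι * (∑ i, z i ^ 3) ^ 2 + Fintype.card ι ^ 2 * ∑ i, z i ^ 6 := by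
  ring_nf
  simp only [sum_add_distrib, sum_sub_distrib, sum_neg_distrib, ← sum_mul, ← mul_sum, sum_const,
    card_univ, nsmul_eq_mul, hz]
  ring

theorem sum_sq_sub_triangle :
    ∑ i, ∑ j, ∑ k, (z i - z j) ^ 2 * (z j - z k) ^ 2 * (z k - z i) ^ 2 =
      -6 * (∑ i, z i ^ 2) ^ 3 + 6 * Fintype.card ι * (∑ i, z i ^ 2) * (∑ i, z i ^ 4)
        - 6 * Fintype.card ι * (∑ i, z i ^ 3) ^ 2 := by
  ring_nf
  simp only [sum_add_distrib, sum_sub_distrib, sum_neg_distrib, ← sum_mul, ← mul_sum, sum_const,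
    card_univ, nsmul_eq_mul, hz]
  ring

theorem sum_sub_pow_six :
    ∑ i, ∑ j, (z i - z j) ^ 6 =
      30 * (∑ i, z i ^ 2) * (∑ i, z i ^ 4) - 20 * (∑ i, z i ^ 3) ^ 2
        + 2 * Fintype.card ι * ∑ i, z i ^ 6 := by
  ring_nf
  simp only [sum_add_distrib, sum_sub_distrib, sum_neg_distrib, ← sum_mul, ← mul_sum, sum_const,
    card_univ, nsmul_eq_mul, hz]
  ring

end PowerSums

theorem ordered_path_square_graph_sum_general
    (n : ℕ) (z : Fin n → ℝ) (hz : ∑ i, z i = 0)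
    (p₂ p₃ p₄ p₆ : ℝ)
    (hp₂ : p₂ = ∑ i, z i ^ 2) (hp₃ : p₃ = ∑ i, z i ^ 3)
    (hp₄ : p₄ = ∑ i, z i ^ 4) (hp₆ : p₆ = ∑ i, z i ^ 6) :
    (∑ f : Fin 4 ↪ Fin n,
        (z (f 0) - z (f 1)) ^ 2 * (z (f 1) - z (f 2)) ^ 2 * (z (f 2) - z (f 3)) ^ 2)
      = (4 * (n : ℝ) - 6) * p₂ ^ 3 - 2 * ((n : ℝ) - 5) * ((n : ℝ) - 2) * p₃ ^ 2
        + (4 * (n : ℝ) ^ 2 - 24 * (n : ℝ) + 30) * p₂ * p₄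
        - 2 * (n : ℝ) * ((n : ℝ) - 1) * p₆ := by
  rw [sum_fin_four_embedding_path (fun i j => (z i - z j) ^ 2) (fun i => by simp)
    (fun i j => by ring)]
  simp only [← pow_mul, Nat.reduceMul]
  rw [sum_sq_sub_path z hz, sum_sq_sub_cherry z hz, sum_sq_sub_triangle z hz,
    sum_sub_pow_six z hz, Fintype.card_fin, ← hp₂, ← hp₃, ← hp₄, ← hp₆]
  ring

theorem ordered_path_square_graph_sum
    (n : ℕ) (hn : 1 ≤ n) (z : Fin n → ℝ) (hz : ∑ i, z i = 0)
    (p₂ p₃ p₄ p₆ : ℝ)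
    (hp₂ : p₂ = ∑ i, z i ^ 2) (hp₃ : p₃ = ∑ i, z i ^ 3)
    (hp₄ : p₄ = ∑ i, z i ^ 4) (hp₆ : p₆ = ∑ i, z i ^ 6) :
    (∑ f : Fin 4 ↪ Fin n,
        (z (f 0) - z (f 1)) ^ 2 * (z (f 1) - z (f 2)) ^ 2 * (z (f 2) - z (f 3)) ^ 2)
      = (4 * (n : ℝ) - 6) * p₂ ^ 3 - 2 * ((n : ℝ) - 5) * ((n : ℝ) - 2) * p₃ ^ 2
        + (4 * (n : ℝ) ^ 2 - 24 * (n : ℝ) + 30) * p₂ * p₄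
        - 2 * (n : ℝ) * ((n : ℝ) - 1) * p₆ :=
  ordered_path_square_graph_sum_general n z hz p₂ p₃ p₄ p₆ hp₂ hp₃ hp₄ hp₆
end

section
/- Let n ≥ 1 and let z_1, …, z_n be real numbers with ∑_{i=1}^n z_i = 0. Set p_r = ∑_i z_i^r. Then the sum of (z_i - z_j)^4 (z_k - z_l)^2 over all ordered quadruples (i, j, k, l) of pairwise distinct indices in {1, …, n} equals 12(n-2)·p_2^3 + 8(2n-5)·p_3^2 + (4n^2 - 36n + 60)·p_2·p_4 - 4n(n-1)·p_6. -/
/-!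
Enumerate injective `(i, j, k, l)` as `i`, then `j ≠ i`, then `k ∉ {i, j}`, then
`l ∉ {i, j, k}`. For fixed `i ≠ j`, the inner double sum of `(z k - z l) ^ 2` is a sum of squared
differences over `s = univ \ {i, j}` (the diagonal `l = k` contributes nothing), i.e.
`2 (#s ∑ₛ z² - (∑ₛ z)²)`, and centring gives `∑ₛ z = -(z i + z j)`. What remains is a double sum
of `(z i - z j) ^ 4` times a polynomial in `z i` and `z j`, which the binomial theorem turns into
products of power sums, with `p₀ = n` and `p₁ = 0`.
-/

open Finset

variable {ι R : Type*}

theorem sum_embedding_fin_four [Fintype ι] [DecidableEq ι] {M : Type*} [AddCommMonoid M]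
    (F : ι → ι → ι → ι → M) :
    ∑ f : Fin 4 ↪ ι, F (f 0) (f 1) (f 2) (f 3) =
      ∑ i, ∑ j ∈ univ.erase i, ∑ k ∈ (univ.erase i).erase j,
        ∑ l ∈ ((univ.erase i).erase j).erase k, F i j k l := by
  simp only [sum_sigma']
  refine sum_bij' (fun f _ => ⟨f 0, f 1, f 2, f 3⟩)
    (fun x hx => ⟨![x.1, x.2.1, x.2.2.1, x.2.2.2], ?_⟩) ?_ (fun _ _ => mem_univ _)
    (fun f _ => ?_) (fun _ _ => rfl) (fun _ _ => rfl)
  · simp only [mem_sigma, mem_erase, mem_univ, and_true] at hx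
    intro s t h
    fin_cases s <;> fin_cases t <;> simp_all [eq_comm]
  · intro f _
    simp only [mem_sigma, mem_erase, mem_univ, and_true, ne_eq, f.injective.eq_iff]
    decide
  · ext s
    fin_cases s <;> rfl

theorem sum_erase_erase_eq_sub [Fintype ι] [DecidableEq ι] {M : Type*} [AddCommGroup M]
    (f : ι → M) {i j : ι} (hij : i ≠ j) :
    ∑ k ∈ (univ.erase i).erase j, f k = ∑ k, f k - f i - f j := by
  rw [sum_erase_eq_sub (mem_erase.2 ⟨hij.symm, mem_univ j⟩), sum_erase_eq_sub (mem_univ i)]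

section CommRing

variable [CommRing R]

theorem sum_sum_sub_sq (s : Finset ι) (x : ι → R) :
    ∑ k ∈ s, ∑ l ∈ s, (x k - x l) ^ 2 = 2 * (#s * ∑ k ∈ s, x k ^ 2 - (∑ k ∈ s, x k) ^ 2) := by
  have h (k l : ι) : (x k - x l) ^ 2 = x k ^ 2 + x l ^ 2 - 2 * x k * x l := by ring
  simp only [h, sum_add_distrib, sum_sub_distrib, sum_const, nsmul_eq_mul, ← mul_sum, ← sum_mul]
  ring

variable [Fintype ι]

def powerSum (z : ι → R) (r : ℕ) : R := ∑ i, z i ^ r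

theorem powerSum_zero (z : ι → R) : powerSum z 0 = Fintype.card ι := by
  simp [powerSum]

theorem powerSum_one (z : ι → R) : powerSum z 1 = ∑ i, z i := by
  simp [powerSum]

theorem sum_sum_sub_pow_mul_pow_mul_pow (z : ι → R) (m a b : ℕ) :
    ∑ i, ∑ j, (z i - z j) ^ m * z i ^ a * z j ^ b =
      ∑ r ∈ range (m + 1),
        (-1) ^ (r + m) * m.choose r * powerSum z (r + a) * powerSum z (m - r + b) := by
  have h (i j : ι) : (z i - z j) ^ m * z i ^ a * z j ^ b = ∑ r ∈ range (m + 1),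
      (-1) ^ (r + m) * m.choose r * z i ^ (r + a) * z j ^ (m - r + b) := by
    rw [sub_pow, sum_mul, sum_mul]
    exact sum_congr rfl fun r _ => by ring
  simp_rw [h, powerSum, mul_sum, sum_mul]
  rw [sum_comm]
  exact (sum_congr rfl fun _ _ => sum_comm).trans sum_comm

variable [DecidableEq ι]

theorem sum_sum_erase_sub_sq_of_sum_eq_zero {z : ι → R} (hz : ∑ i, z i = 0) {i j : ι}
    (hij : i ≠ j) :
    ∑ k ∈ (univ.erase i).erase j, ∑ l ∈ ((univ.erase i).erase j).erase k, (z k - z l) ^ 2 =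
      2 * ((Fintype.card ι - 2) * (powerSum z 2 - z i ^ 2 - z j ^ 2) - (z i + z j) ^ 2) := by
  have hcard : (#((univ.erase i).erase j) : R) = Fintype.card ι - 2 := by
    rw [cast_card_erase_of_mem (mem_erase.2 ⟨hij.symm, mem_univ j⟩),
      cast_card_erase_of_mem (mem_univ i), card_univ]
    ring
  calc _ = ∑ k ∈ (univ.erase i).erase j, ∑ l ∈ (univ.erase i).erase j, (z k - z l) ^ 2 :=
        sum_congr rfl fun k _ => sum_erase _ (by rw [sub_self, sq, zero_mul])
    _ = _ := by
        rw [sum_sum_sub_sq, hcard, sum_erase_erase_eq_sub _ hij, sum_erase_erase_eq_sub _ hij, hz,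
          powerSum]
        ring

theorem sum_embedding_sub_pow_four_mul_sub_sq {z : ι → R} (hz : ∑ i, z i = 0) :
    ∑ f : Fin 4 ↪ ι, (z (f 0) - z (f 1)) ^ 4 * (z (f 2) - z (f 3)) ^ 2 =
      12 * ((Fintype.card ι : R) - 2) * powerSum z 2 ^ 3
        + 8 * (2 * (Fintype.card ι : R) - 5) * powerSum z 3 ^ 2
        + (4 * (Fintype.card ι : R) ^ 2 - 36 * Fintype.card ι + 60) * powerSum z 2 * powerSum z 4
        - 4 * (Fintype.card ι : R) * ((Fintype.card ι : R) - 1) * powerSum z 6 := by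
  set n : R := (Fintype.card ι : R)
  rw [sum_embedding_fin_four fun i j k l => (z i - z j) ^ 4 * (z k - z l) ^ 2]
  calc _ = ∑ i, ∑ j, (z i - z j) ^ 4 *
          (2 * ((n - 2) * (powerSum z 2 - z i ^ 2 - z j ^ 2) - (z i + z j) ^ 2)) := by
        refine sum_congr rfl fun i _ => (sum_congr rfl fun j hj => ?_).trans (sum_erase _ ?_)
        · simp only [← mul_sum]
          rw [sum_sum_erase_sub_sq_of_sum_eq_zero hz (ne_of_mem_erase hj).symm]
        · rw [sub_self, zero_pow four_ne_zero, zero_mul]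
    _ = 2 * (n - 2) * powerSum z 2 * ∑ i, ∑ j, (z i - z j) ^ 4 * z i ^ 0 * z j ^ 0
        - 2 * (n - 1) * ∑ i, ∑ j, (z i - z j) ^ 4 * z i ^ 2 * z j ^ 0
        - 2 * (n - 1) * ∑ i, ∑ j, (z i - z j) ^ 4 * z i ^ 0 * z j ^ 2
        - 4 * ∑ i, ∑ j, (z i - z j) ^ 4 * z i ^ 1 * z j ^ 1 := by
        simp only [mul_sum, ← sum_sub_distrib]
        exact sum_congr rfl fun i _ => sum_congr rfl fun j _ => by ring
    _ = _ := by
        have h0 : powerSum z 0 = n := powerSum_zero z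
        have h1 : powerSum z 1 = 0 := (powerSum_one z).trans hz
        simp only [sum_sum_sub_pow_mul_pow_mul_pow, sum_range_succ, sum_range_zero]
        norm_num [Nat.choose, h0, h1]
        ring

end CommRing

theorem ordered_double_edge_plus_edge_square_graph_sum_general
    (n : ℕ) (z : Fin n → ℝ) (hz : ∑ i, z i = 0)
    (p₂ p₃ p₄ p₆ : ℝ)
    (hp₂ : p₂ = ∑ i, z i ^ 2) (hp₃ : p₃ = ∑ i, z i ^ 3)
    (hp₄ : p₄ = ∑ i, z i ^ 4) (hp₆ : p₆ = ∑ i, z i ^ 6) :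
    (∑ f : Fin 4 ↪ Fin n, (z (f 0) - z (f 1)) ^ 4 * (z (f 2) - z (f 3)) ^ 2)
      = 12 * ((n : ℝ) - 2) * p₂ ^ 3 + 8 * (2 * (n : ℝ) - 5) * p₃ ^ 2
        + (4 * (n : ℝ) ^ 2 - 36 * (n : ℝ) + 60) * p₂ * p₄
        - 4 * (n : ℝ) * ((n : ℝ) - 1) * p₆ := by
  simpa [hp₂, hp₃, hp₄, hp₆, powerSum] using sum_embedding_sub_pow_four_mul_sub_sq hz

theorem ordered_double_edge_plus_edge_square_graph_sum
    (n : ℕ) (hn : 1 ≤ n) (z : Fin n → ℝ) (hz : ∑ i, z i = 0)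
    (p₂ p₃ p₄ p₆ : ℝ)
    (hp₂ : p₂ = ∑ i, z i ^ 2) (hp₃ : p₃ = ∑ i, z i ^ 3)
    (hp₄ : p₄ = ∑ i, z i ^ 4) (hp₆ : p₆ = ∑ i, z i ^ 6) :
    (∑ f : Fin 4 ↪ Fin n, (z (f 0) - z (f 1)) ^ 4 * (z (f 2) - z (f 3)) ^ 2)
      = 12 * ((n : ℝ) - 2) * p₂ ^ 3 + 8 * (2 * (n : ℝ) - 5) * p₃ ^ 2
        + (4 * (n : ℝ) ^ 2 - 36 * (n : ℝ) + 60) * p₂ * p₄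
        - 4 * (n : ℝ) * ((n : ℝ) - 1) * p₆ :=
  ordered_double_edge_plus_edge_square_graph_sum_general n z hz p₂ p₃ p₄ p₆ hp₂ hp₃ hp₄ hp₆
end

section
/- Let n ≥ 1 and let z_1, …, z_n be real numbers with ∑_{i=1}^n z_i = 0. Set p_r = ∑_i z_i^r. Then the sum of (z_i - z_j)^2 (z_k - z_l)^2 (z_m - z_s)^2 over all ordered sextuples (i, j, k, l, m, s) of pairwise distinct indices in {1, …, n} equals 8(n-2)(n^2 - 7n + 15)·p_2^3 - 16(3n^2 - 15n + 20)·p_3^2 - 24(n-2)(n^2 - 5n + 10)·p_2·p_4 + 16n(n-1)(n-2)·p_6. -/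
set_option maxHeartbeats 4000000

open Finset

private lemma mv0 {N : ℕ} (a b c d e g : Fin N) : ![a,b,c,d,e,g] 0 = a := rfl
private lemma mv1 {N : ℕ} (a b c d e g : Fin N) : ![a,b,c,d,e,g] 1 = b := rfl
private lemma mv2 {N : ℕ} (a b c d e g : Fin N) : ![a,b,c,d,e,g] 2 = c := rfl
private lemma mv3 {N : ℕ} (a b c d e g : Fin N) : ![a,b,c,d,e,g] 3 = d := rfl
private lemma mv4 {N : ℕ} (a b c d e g : Fin N) : ![a,b,c,d,e,g] 4 = e := rfl
private lemma mv5 {N : ℕ} (a b c d e g : Fin N) : ![a,b,c,d,e,g] 5 = g := rfl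

private lemma matrix_inj {N : ℕ} (a b c d e g : Fin N)
    (h1 : b ≠ a) (h2 : c ≠ a) (h3 : c ≠ b) (h4 : d ≠ a) (h5 : d ≠ b) (h6 : d ≠ c)
    (h7 : e ≠ a) (h8 : e ≠ b) (h9 : e ≠ c) (h10 : e ≠ d)
    (h11 : g ≠ a) (h12 : g ≠ b) (h13 : g ≠ c) (h14 : g ≠ d) (h15 : g ≠ e) :
    Function.Injective ![a,b,c,d,e,g] := by
  intro x y hxy
  fin_cases x <;> fin_cases y <;>
    simp_all [mv0, mv1, mv2, mv3, mv4, mv5]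

private lemma sum_emb {N : ℕ} (F : Fin N → Fin N → Fin N → Fin N → Fin N → Fin N → ℝ) :
    ∑ f : Fin 6 ↪ Fin N, F (f 0) (f 1) (f 2) (f 3) (f 4) (f 5)
    = ∑ i, ∑ j ∈ univ \ {i}, ∑ k ∈ univ \ {i,j}, ∑ l ∈ univ \ {i,j,k},
        ∑ m ∈ univ \ {i,j,k,l}, ∑ s ∈ univ \ {i,j,k,l,m}, F i j k l m s := by
  classical
  have h2 : ∑ x ∈ ((univ : Finset (Fin N)).sigma fun i => (univ \ {i}).sigma fun j =>
      (univ \ {i,j}).sigma fun k => (univ \ {i,j,k}).sigma fun l =>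
      (univ \ {i,j,k,l}).sigma fun m => (univ \ {i,j,k,l,m} : Finset (Fin N))),
      F x.1 x.2.1 x.2.2.1 x.2.2.2.1 x.2.2.2.2.1 x.2.2.2.2.2
      = ∑ i, ∑ j ∈ univ \ {i}, ∑ k ∈ univ \ {i,j}, ∑ l ∈ univ \ {i,j,k},
      ∑ m ∈ univ \ {i,j,k,l}, ∑ s ∈ univ \ {i,j,k,l,m}, F i j k l m s := by
    rw [Finset.sum_sigma]
    refine Finset.sum_congr rfl fun i _ => ?_
    rw [Finset.sum_sigma]
    refine Finset.sum_congr rfl fun j _ => ?_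
    rw [Finset.sum_sigma]
    refine Finset.sum_congr rfl fun k _ => ?_
    rw [Finset.sum_sigma]
    refine Finset.sum_congr rfl fun l _ => ?_
    rw [Finset.sum_sigma]
  rw [← h2]
  refine Finset.sum_bij (fun f _ => ⟨f 0, f 1, f 2, f 3, f 4, f 5⟩) ?_ ?_ ?_ ?_
  · intro f _
    simp only [Finset.mem_sigma, Finset.mem_univ, Finset.mem_sdiff, Finset.mem_insert,
      Finset.mem_singleton, true_and]
    simp only [not_or]
    refine ⟨?_, ⟨?_, ?_⟩, ⟨?_, ?_, ?_⟩, ⟨?_, ?_, ?_, ?_⟩, ?_, ?_, ?_, ?_, ?_⟩ <;>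
      exact fun h => absurd (f.injective h) (by decide)
  · intro f _ g _ h
    simp only [Sigma.mk.inj_iff, heq_eq_eq] at h
    obtain ⟨h0, h1, h2, h3, h4, h5⟩ := h
    ext x
    fin_cases x
    · exact congrArg Fin.val h0
    · exact congrArg Fin.val h1
    · exact congrArg Fin.val h2
    · exact congrArg Fin.val h3
    · exact congrArg Fin.val h4
    · exact congrArg Fin.val h5
  · rintro ⟨i, j, k, l, m, s⟩ hx
    simp only [Finset.mem_sigma, Finset.mem_univ, Finset.mem_sdiff, Finset.mem_insert,
      Finset.mem_singleton, true_and, not_or] at hx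
    obtain ⟨hj, ⟨hki, hkj⟩, ⟨hli, hlj, hlk⟩, ⟨hmi, hmj, hmk, hml⟩, hsi, hsj, hsk, hsl, hsm⟩ := hx
    refine ⟨⟨![i,j,k,l,m,s], matrix_inj i j k l m s hj hki hkj hli hlj hlk hmi hmj hmk hml
      hsi hsj hsk hsl hsm⟩, Finset.mem_univ _, rfl⟩
  · intro f _
    rfl

private lemma sum_poly {N : ℕ} (z : Fin N → ℝ) (c0 c1 c2 c3 c4 c5 c6 : ℝ) :
    (∑ x : Fin N, (c0 + c1 * z x + c2 * z x ^ 2 + c3 * z x ^ 3 + c4 * z x ^ 4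
        + c5 * z x ^ 5 + c6 * z x ^ 6))
    = (N : ℝ) * c0 + c1 * (∑ x, z x) + c2 * (∑ x, z x ^ 2) + c3 * (∑ x, z x ^ 3)
      + c4 * (∑ x, z x ^ 4) + c5 * (∑ x, z x ^ 5) + c6 * (∑ x, z x ^ 6) := by
  simp only [Finset.sum_add_distrib, ← Finset.mul_sum, Finset.sum_const,
    Finset.card_univ, Fintype.card_fin, nsmul_eq_mul]


private lemma levelS {N : ℕ} (z : Fin N → ℝ) (p2 p3 p4 p5 p6 : ℝ)
    (hz : ∑ x, z x = 0) (hp2 : p2 = ∑ x, z x ^ 2) (hp3 : p3 = ∑ x, z x ^ 3)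
    (hp4 : p4 = ∑ x, z x ^ 4) (hp5 : p5 = ∑ x, z x ^ 5) (hp6 : p6 = ∑ x, z x ^ 6)
    (i j k l m : Fin N)
    (hji : j ≠ i) (hki : k ≠ i) (hkj : k ≠ j) (hli : l ≠ i) (hlj : l ≠ j) (hlk : l ≠ k) (hmi : m ≠ i) (hmj : m ≠ j) (hmk : m ≠ k) (hml : m ≠ l) :
    (∑ s ∈ univ \ {i, j, k, l, m}, (z i - z j) ^ 2 * (z k - z l) ^ 2 * (z m - z s) ^ 2)
    = (z i - z j) ^ 2 * (z k - z l) ^ 2 * (1*(p2) + (-4)*(z m) ^ 2 + 1*(z m) ^ 2*((N : ℝ)) + 2*(z l)*(z m) + (-1)*(z l) ^ 2 + 2*(z k)*(z m) + (-1)*(z k) ^ 2 + 2*(z j)*(z m) + (-1)*(z j) ^ 2 + 2*(z i)*(z m) + (-1)*(z i) ^ 2) := by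
  have hu : (∑ x : Fin N, (z i - z j) ^ 2 * (z k - z l) ^ 2 * (z m - z x) ^ 2) = (1*(z j) ^ 2*(z l) ^ 2*(p2) + 1*(z j) ^ 2*(z l) ^ 2*(z m) ^ 2*((N : ℝ)) + (-2)*(z j) ^ 2*(z k)*(z l)*(p2) + (-2)*(z j) ^ 2*(z k)*(z l)*(z m) ^ 2*((N : ℝ)) + 1*(z j) ^ 2*(z k) ^ 2*(p2) + 1*(z j) ^ 2*(z k) ^ 2*(z m) ^ 2*((N : ℝ)) + (-2)*(z i)*(z j)*(z l) ^ 2*(p2) + (-2)*(z i)*(z j)*(z l) ^ 2*(z m) ^ 2*((N : ℝ)) + 4*(z i)*(z j)*(z k)*(z l)*(p2) + 4*(z i)*(z j)*(z k)*(z l)*(z m) ^ 2*((N : ℝ)) + (-2)*(z i)*(z j)*(z k) ^ 2*(p2) + (-2)*(z i)*(z j)*(z k) ^ 2*(z m) ^ 2*((N : ℝ)) + 1*(z i) ^ 2*(z l) ^ 2*(p2) + 1*(z i) ^ 2*(z l) ^ 2*(z m) ^ 2*((N : ℝ)) + (-2)*(z i) ^ 2*(z k)*(z l)*(p2) + (-2)*(z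 i) ^ 2*(z k)*(z l)*(z m) ^ 2*((N : ℝ)) + 1*(z i) ^ 2*(z k) ^ 2*(p2) + 1*(z i) ^ 2*(z k) ^ 2*(z m) ^ 2*((N : ℝ))) := by
    rw [show (∑ x : Fin N, (z i - z j) ^ 2 * (z k - z l) ^ 2 * (z m - z x) ^ 2)
        = ∑ x : Fin N, (((1*(z j) ^ 2*(z l) ^ 2*(z m) ^ 2 + (-2)*(z j) ^ 2*(z k)*(z l)*(z m) ^ 2 + 1*(z j) ^ 2*(z k) ^ 2*(z m) ^ 2 + (-2)*(z i)*(z j)*(z l) ^ 2*(z m) ^ 2 + 4*(z i)*(z j)*(z k)*(z l)*(z m) ^ 2 + (-2)*(z i)*(z j)*(z k) ^ 2*(z m) ^ 2 + 1*(z i) ^ 2*(z l) ^ 2*(z m) ^ 2 + (-2)*(z i) ^ 2*(z k)*(z l)*(z m) ^ 2 + 1*(z i) ^ 2*(z k) ^ 2*(z m) ^ 2)) + (((-2)*(z j) ^ 2*(z l) ^ 2*(z m) + 4*(z j) ^ 2*(z k)*(z l)*(z m) + (-2)*(z j) ^ 2*(z k) ^ 2*(z m) + 4*(z i)*(z j)*(z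 l) ^ 2*(z m) + (-8)*(z i)*(z j)*(z k)*(z l)*(z m) + 4*(z i)*(z j)*(z k) ^ 2*(z m) + (-2)*(z i) ^ 2*(z l) ^ 2*(z m) + 4*(z i) ^ 2*(z k)*(z l)*(z m) + (-2)*(z i) ^ 2*(z k) ^ 2*(z m))) * z x + ((1*(z j) ^ 2*(z l) ^ 2 + (-2)*(z j) ^ 2*(z k)*(z l) + 1*(z j) ^ 2*(z k) ^ 2 + (-2)*(z i)*(z j)*(z l) ^ 2 + 4*(z i)*(z j)*(z k)*(z l) + (-2)*(z i)*(z j)*(z k) ^ 2 + 1*(z i) ^ 2*(z l) ^ 2 + (-2)*(z i) ^ 2*(z k)*(z l) + 1*(z i) ^ 2*(z k) ^ 2)) * z x ^ 2 + (0) * z x ^ 3 + (0) * z x ^ 4 + (0) * z x ^ 5 + (0) * z x ^ 6) from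
      Finset.sum_congr rfl fun x _ => by ring]
    rw [sum_poly, hz, ← hp2, ← hp3, ← hp4, ← hp5, ← hp6]
    ring
  rw [Finset.sum_sdiff_eq_sub (Finset.subset_univ _), hu,
      Finset.sum_insert (by simp [Ne.symm hji, Ne.symm hki, Ne.symm hli, Ne.symm hmi]),
      Finset.sum_insert (by simp [Ne.symm hkj, Ne.symm hlj, Ne.symm hmj]),
      Finset.sum_insert (by simp [Ne.symm hlk, Ne.symm hmk]),
      Finset.sum_insert (by simp [Ne.symm hml]),
      Finset.sum_singleton]
  ring

private lemma levelM {N : ℕ} (z : Fin N → ℝ) (p2 p3 p4 p5 p6 : ℝ)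
    (hz : ∑ x, z x = 0) (hp2 : p2 = ∑ x, z x ^ 2) (hp3 : p3 = ∑ x, z x ^ 3)
    (hp4 : p4 = ∑ x, z x ^ 4) (hp5 : p5 = ∑ x, z x ^ 5) (hp6 : p6 = ∑ x, z x ^ 6)
    (i j k l : Fin N)
    (hji : j ≠ i) (hki : k ≠ i) (hkj : k ≠ j) (hli : l ≠ i) (hlj : l ≠ j) (hlk : l ≠ k) :
    (∑ m ∈ univ \ {i, j, k, l}, (z i - z j) ^ 2 * (z k - z l) ^ 2 * (1*(p2) + (-4)*(z m) ^ 2 + 1*(z m) ^ 2*((N : ℝ)) + 2*(z l)*(z m) + (-1)*(z l) ^ 2 + 2*(z k)*(z m) + (-1)*(z k) ^ 2 + 2*(z j)*(z m) + (-1)*(z j) ^ 2 + 2*(z i)*(z m) + (-1)*(z i) ^ 2))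
    = (z i - z j) ^ 2 * (z k - z l) ^ 2 * ((-8)*(p2) + 2*((N : ℝ))*(p2) + 6*(z l) ^ 2 + (-2)*(z l) ^ 2*((N : ℝ)) + (-4)*(z k)*(z l) + 6*(z k) ^ 2 + (-2)*(z k) ^ 2*((N : ℝ)) + (-4)*(z j)*(z l) + (-4)*(z j)*(z k) + 6*(z j) ^ 2 + (-2)*(z j) ^ 2*((N : ℝ)) + (-4)*(z i)*(z l) + (-4)*(z i)*(z k) + (-4)*(z i)*(z j) + 6*(z i) ^ 2 + (-2)*(z i) ^ 2*((N : ℝ))) := by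
  have hu : (∑ x : Fin N, (z i - z j) ^ 2 * (z k - z l) ^ 2 * (1*(p2) + (-4)*(z x) ^ 2 + 1*(z x) ^ 2*((N : ℝ)) + 2*(z l)*(z x) + (-1)*(z l) ^ 2 + 2*(z k)*(z x) + (-1)*(z k) ^ 2 + 2*(z j)*(z x) + (-1)*(z j) ^ 2 + 2*(z i)*(z x) + (-1)*(z i) ^ 2)) = (z i - z j) ^ 2 * (z k - z l) ^ 2 * ((-4)*(p2) + 2*((N : ℝ))*(p2) + (-1)*(z l) ^ 2*((N : ℝ)) + (-1)*(z k) ^ 2*((N : ℝ)) + (-1)*(z j) ^ 2*((N : ℝ)) + (-1)*(z i) ^ 2*((N : ℝ))) := by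
    rw [show (∑ x : Fin N, (z i - z j) ^ 2 * (z k - z l) ^ 2 * (1*(p2) + (-4)*(z x) ^ 2 + 1*(z x) ^ 2*((N : ℝ)) + 2*(z l)*(z x) + (-1)*(z l) ^ 2 + 2*(z k)*(z x) + (-1)*(z k) ^ 2 + 2*(z j)*(z x) + (-1)*(z j) ^ 2 + 2*(z i)*(z x) + (-1)*(z i) ^ 2))
        = ∑ x : Fin N, (((z i - z j) ^ 2 * (z k - z l) ^ 2 * (1*(p2) + (-1)*(z l) ^ 2 + (-1)*(z k) ^ 2 + (-1)*(z j) ^ 2 + (-1)*(z i) ^ 2)) + ((z i - z j) ^ 2 * (z k - z l) ^ 2 * (2*(z l) + 2*(z k) + 2*(z j) + 2*(z i))) * z x + ((z i - z j) ^ 2 * (z k - z l) ^ 2 * ((-4) + 1*((N : ℝ)))) * z x ^ 2 + (0) * z x ^ 3 + (0) * z x ^ 4 + (0) * z x ^ 5 + (0) * z x ^ 6) from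
      Finset.sum_congr rfl fun x _ => by ring]
    rw [sum_poly, hz, ← hp2, ← hp3, ← hp4, ← hp5, ← hp6]
    ring
  rw [Finset.sum_sdiff_eq_sub (Finset.subset_univ _), hu,
      Finset.sum_insert (by simp [Ne.symm hji, Ne.symm hki, Ne.symm hli]),
      Finset.sum_insert (by simp [Ne.symm hkj, Ne.symm hlj]),
      Finset.sum_insert (by simp [Ne.symm hlk]),
      Finset.sum_singleton]
  ring

private lemma levelL {N : ℕ} (z : Fin N → ℝ) (p2 p3 p4 p5 p6 : ℝ)
    (hz : ∑ x, z x = 0) (hp2 : p2 = ∑ x, z x ^ 2) (hp3 : p3 = ∑ x, z x ^ 3)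
    (hp4 : p4 = ∑ x, z x ^ 4) (hp5 : p5 = ∑ x, z x ^ 5) (hp6 : p6 = ∑ x, z x ^ 6)
    (i j k : Fin N)
    (hji : j ≠ i) (hki : k ≠ i) (hkj : k ≠ j) :
    (∑ l ∈ univ \ {i, j, k}, (z i - z j) ^ 2 * (z k - z l) ^ 2 * ((-8)*(p2) + 2*((N : ℝ))*(p2) + 6*(z l) ^ 2 + (-2)*(z l) ^ 2*((N : ℝ)) + (-4)*(z k)*(z l) + 6*(z k) ^ 2 + (-2)*(z k) ^ 2*((N : ℝ)) + (-4)*(z j)*(z l) + (-4)*(z j)*(z k) + 6*(z j) ^ 2 + (-2)*(z j) ^ 2*((N : ℝ)) + (-4)*(z i)*(z l) + (-4)*(z i)*(z k) + (-4)*(z i)*(z j) + 6*(z i) ^ 2 + (-2)*(z i) ^ 2*((N : ℝ))))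
    = (z i - z j) ^ 2 * (6*(p4) + (-8)*(p2) ^ 2 + (-2)*((N : ℝ))*(p4) + 2*((N : ℝ))*(p2) ^ 2 + (-16)*(z k)*(p3) + 4*(z k)*((N : ℝ))*(p3) + 36*(z k) ^ 2*(p2) + (-16)*(z k) ^ 2*((N : ℝ))*(p2) + 2*(z k) ^ 2*((N : ℝ)) ^ 2*(p2) + (-12)*(z k) ^ 4 + 10*(z k) ^ 4*((N : ℝ)) + (-2)*(z k) ^ 4*((N : ℝ)) ^ 2 + (-4)*(z j)*(p3) + (-12)*(z j)*(z k)*(p2) + 4*(z j)*(z k)*((N : ℝ))*(p2) + 24*(z j)*(z k) ^ 3 + (-8)*(z j)*(z k) ^ 3*((N : ℝ)) + 14*(z j) ^ 2*(p2) + (-4)*(z j) ^ 2*((N : ℝ))*(p2) + (-36)*(z j) ^ 2*(z k) ^ 2 + 14*(z j) ^ 2*(z k) ^ 2*((N : ℝ)) + (-2)*(z j) ^ 2*(z k) ^ 2*((N : ℝ)) ^ 2 + 24*(z j) ^ 3*(z k) + (-8)*(z j) ^ 3*(z k)*((N : ℝ)) + (-8)*(z j) ^ 4 + 4*(z j) ^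 4*((N : ℝ)) + (-4)*(z i)*(p3) + (-12)*(z i)*(z k)*(p2) + 4*(z i)*(z k)*((N : ℝ))*(p2) + 24*(z i)*(z k) ^ 3 + (-8)*(z i)*(z k) ^ 3*((N : ℝ)) + (-4)*(z i)*(z j)*(p2) + (-4)*(z i)*(z j)*(z k) ^ 2*((N : ℝ)) + (-4)*(z i)*(z j) ^ 2*(z k)*((N : ℝ)) + 8*(z i)*(z j) ^ 3 + 14*(z i) ^ 2*(p2) + (-4)*(z i) ^ 2*((N : ℝ))*(p2) + (-36)*(z i) ^ 2*(z k) ^ 2 + 14*(z i) ^ 2*(z k) ^ 2*((N : ℝ)) + (-2)*(z i) ^ 2*(z k) ^ 2*((N : ℝ)) ^ 2 + (-4)*(z i) ^ 2*(z j)*(z k)*((N : ℝ)) + (-12)*(z i) ^ 2*(z j) ^ 2 + 4*(z i) ^ 2*(z j) ^ 2*((N : ℝ)) + 24*(z i) ^ 3*(z k) + (-8)*(z i) ^ 3*(z k)*((N : ℝ)) + 8*(z i) ^ 3*(z j) + (-8)*(z i) ^ 4 + 4*(z i) ^ 4*((N : ℝ))) := by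
  have hu : (∑ x : Fin N, (z i - z j) ^ 2 * (z k - z x) ^ 2 * ((-8)*(p2) + 2*((N : ℝ))*(p2) + 6*(z x) ^ 2 + (-2)*(z x) ^ 2*((N : ℝ)) + (-4)*(z k)*(z x) + 6*(z k) ^ 2 + (-2)*(z k) ^ 2*((N : ℝ)) + (-4)*(z j)*(z x) + (-4)*(z j)*(z k) + 6*(z j) ^ 2 + (-2)*(z j) ^ 2*((N : ℝ)) + (-4)*(z i)*(z x) + (-4)*(z i)*(z k) + (-4)*(z i)*(z j) + 6*(z i) ^ 2 + (-2)*(z i) ^ 2*((N : ℝ)))) = (z i - z j) ^ 2 * (6*(p4) + (-8)*(p2) ^ 2 + (-2)*((N : ℝ))*(p4) + 2*((N : ℝ))*(p2) ^ 2 + (-16)*(z k)*(p3) + 4*(z k)*((N : ℝ))*(p3) + 20*(z k) ^ 2*(p2) + (-12)*(z k) ^ 2*((N : ℝ))*(p2) + 2*(z k) ^ 2*((N : ℝ)) ^ 2*(p2) + 6*(z k) ^ 4*((N : ℝ)) + (-2)*(z k) ^ 4*((N : ℝ)) ^ 2 + (-4)*(z j)*(p3) + 4*(z j)*(z k)*(p2)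 + (-4)*(z j)*(z k) ^ 3*((N : ℝ)) + 6*(z j) ^ 2*(p2) + (-2)*(z j) ^ 2*((N : ℝ))*(p2) + 6*(z j) ^ 2*(z k) ^ 2*((N : ℝ)) + (-2)*(z j) ^ 2*(z k) ^ 2*((N : ℝ)) ^ 2 + (-4)*(z i)*(p3) + 4*(z i)*(z k)*(p2) + (-4)*(z i)*(z k) ^ 3*((N : ℝ)) + (-4)*(z i)*(z j)*(p2) + (-4)*(z i)*(z j)*(z k) ^ 2*((N : ℝ)) + 6*(z i) ^ 2*(p2) + (-2)*(z i) ^ 2*((N : ℝ))*(p2) + 6*(z i) ^ 2*(z k) ^ 2*((N : ℝ)) + (-2)*(z i) ^ 2*(z k) ^ 2*((N : ℝ)) ^ 2) := by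
    rw [show (∑ x : Fin N, (z i - z j) ^ 2 * (z k - z x) ^ 2 * ((-8)*(p2) + 2*((N : ℝ))*(p2) + 6*(z x) ^ 2 + (-2)*(z x) ^ 2*((N : ℝ)) + (-4)*(z k)*(z x) + 6*(z k) ^ 2 + (-2)*(z k) ^ 2*((N : ℝ)) + (-4)*(z j)*(z x) + (-4)*(z j)*(z k) + 6*(z j) ^ 2 + (-2)*(z j) ^ 2*((N : ℝ)) + (-4)*(z i)*(z x) + (-4)*(z i)*(z k) + (-4)*(z i)*(z j) + 6*(z i) ^ 2 + (-2)*(z i) ^ 2*((N : ℝ))))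
        = ∑ x : Fin N, (((z i - z j) ^ 2 * ((-8)*(z k) ^ 2*(p2) + 2*(z k) ^ 2*((N : ℝ))*(p2) + 6*(z k) ^ 4 + (-2)*(z k) ^ 4*((N : ℝ)) + (-4)*(z j)*(z k) ^ 3 + 6*(z j) ^ 2*(z k) ^ 2 + (-2)*(z j) ^ 2*(z k) ^ 2*((N : ℝ)) + (-4)*(z i)*(z k) ^ 3 + (-4)*(z i)*(z j)*(z k) ^ 2 + 6*(z i) ^ 2*(z k) ^ 2 + (-2)*(z i) ^ 2*(z k) ^ 2*((N : ℝ)))) + ((z i - z j) ^ 2 * (16*(z k)*(p2) + (-4)*(z k)*((N : ℝ))*(p2) + (-16)*(z k) ^ 3 + 4*(z k) ^ 3*((N : ℝ)) + 4*(z j)*(z k) ^ 2 + (-12)*(z j) ^ 2*(z k) + 4*(z j) ^ 2*(z k)*((N : ℝ)) + 4*(z i)*(z k) ^ 2 + 8*(z i)*(z j)*(z k) + (-12)*(z i) ^ 2*(z k) + 4*(z i) ^ 2*(z k)*((N : ℝ)))) * z x + ((z i - z j) ^ 2 * ((-8)*(p2) + 2*((N : ℝ))*(p2) + 20*(z k)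 ^ 2 + (-4)*(z k) ^ 2*((N : ℝ)) + 4*(z j)*(z k) + 6*(z j) ^ 2 + (-2)*(z j) ^ 2*((N : ℝ)) + 4*(z i)*(z k) + (-4)*(z i)*(z j) + 6*(z i) ^ 2 + (-2)*(z i) ^ 2*((N : ℝ)))) * z x ^ 2 + ((z i - z j) ^ 2 * ((-16)*(z k) + 4*(z k)*((N : ℝ)) + (-4)*(z j) + (-4)*(z i))) * z x ^ 3 + ((z i - z j) ^ 2 * (6 + (-2)*((N : ℝ)))) * z x ^ 4 + (0) * z x ^ 5 + (0) * z x ^ 6) from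
      Finset.sum_congr rfl fun x _ => by ring]
    rw [sum_poly, hz, ← hp2, ← hp3, ← hp4, ← hp5, ← hp6]
    ring
  rw [Finset.sum_sdiff_eq_sub (Finset.subset_univ _), hu,
      Finset.sum_insert (by simp [Ne.symm hji, Ne.symm hki]),
      Finset.sum_insert (by simp [Ne.symm hkj]),
      Finset.sum_singleton]
  ring

private lemma levelK {N : ℕ} (z : Fin N → ℝ) (p2 p3 p4 p5 p6 : ℝ)
    (hz : ∑ x, z x = 0) (hp2 : p2 = ∑ x, z x ^ 2) (hp3 : p3 = ∑ x, z x ^ 3)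
    (hp4 : p4 = ∑ x, z x ^ 4) (hp5 : p5 = ∑ x, z x ^ 5) (hp6 : p6 = ∑ x, z x ^ 6)
    (i j : Fin N)
    (hji : j ≠ i) :
    (∑ k ∈ univ \ {i, j}, (z i - z j) ^ 2 * (6*(p4) + (-8)*(p2) ^ 2 + (-2)*((N : ℝ))*(p4) + 2*((N : ℝ))*(p2) ^ 2 + (-16)*(z k)*(p3) + 4*(z k)*((N : ℝ))*(p3) + 36*(z k) ^ 2*(p2) + (-16)*(z k) ^ 2*((N : ℝ))*(p2) + 2*(z k) ^ 2*((N : ℝ)) ^ 2*(p2) + (-12)*(z k) ^ 4 + 10*(z k) ^ 4*((N : ℝ)) + (-2)*(z k) ^ 4*((N : ℝ)) ^ 2 + (-4)*(z j)*(p3) + (-12)*(z j)*(z k)*(p2) + 4*(z j)*(z k)*((N : ℝ))*(p2) + 24*(z j)*(z k) ^ 3 + (-8)*(z j)*(z k) ^ 3*((N : ℝ)) + 14*(z j) ^ 2*(p2) + (-4)*(z j) ^ 2*((N : ℝ))*(p2) + (-36)*(z j) ^ 2*(z k) ^ 2 + 14*(z j) ^ 2*(z k) ^ 2*((N : ℝ))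 + (-2)*(z j) ^ 2*(z k) ^ 2*((N : ℝ)) ^ 2 + 24*(z j) ^ 3*(z k) + (-8)*(z j) ^ 3*(z k)*((N : ℝ)) + (-8)*(z j) ^ 4 + 4*(z j) ^ 4*((N : ℝ)) + (-4)*(z i)*(p3) + (-12)*(z i)*(z k)*(p2) + 4*(z i)*(z k)*((N : ℝ))*(p2) + 24*(z i)*(z k) ^ 3 + (-8)*(z i)*(z k) ^ 3*((N : ℝ)) + (-4)*(z i)*(z j)*(p2) + (-4)*(z i)*(z j)*(z k) ^ 2*((N : ℝ)) + (-4)*(z i)*(z j) ^ 2*(z k)*((N : ℝ)) + 8*(z i)*(z j) ^ 3 + 14*(z i) ^ 2*(p2) + (-4)*(z i) ^ 2*((N : ℝ))*(p2) + (-36)*(z i) ^ 2*(z k) ^ 2 + 14*(z i) ^ 2*(z k) ^ 2*((N : ℝ)) + (-2)*(z i) ^ 2*(z k) ^ 2*((N : ℝ)) ^ 2 + (-4)*(z i) ^ 2*(z j)*(z k)*((N : ℝ)) + (-12)*(z i) ^ 2*(z j) ^ 2 + 4*(z i) ^ 2*(z j) ^ 2*((N : ℝ)) + 24*(z i) ^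 3*(z k) + (-8)*(z i) ^ 3*(z k)*((N : ℝ)) + 8*(z i) ^ 3*(z j) + (-8)*(z i) ^ 4 + 4*(z i) ^ 4*((N : ℝ))))
    = (z i - z j) ^ 2 * ((-24)*(p4) + 52*(p2) ^ 2 + 20*((N : ℝ))*(p4) + (-28)*((N : ℝ))*(p2) ^ 2 + (-4)*((N : ℝ)) ^ 2*(p4) + 4*((N : ℝ)) ^ 2*(p2) ^ 2 + 48*(z j)*(p3) + (-16)*(z j)*((N : ℝ))*(p3) + (-88)*(z j) ^ 2*(p2) + 48*(z j) ^ 2*((N : ℝ))*(p2) + (-8)*(z j) ^ 2*((N : ℝ)) ^ 2*(p2) + 16*(z j) ^ 4 + (-24)*(z j) ^ 4*((N : ℝ)) + 8*(z j) ^ 4*((N : ℝ)) ^ 2 + 48*(z i)*(p3) + (-16)*(z i)*((N : ℝ))*(p3) + 32*(z i)*(z j)*(p2) + (-16)*(z i)*(z j)*((N : ℝ))*(p2) + (-64)*(z i)*(z j) ^ 3 + 32*(z i)*(z j) ^ 3*((N : ℝ)) + (-88)*(z i) ^ 2*(p2) + 48*(z i) ^ 2*((N : ℝ))*(p2) + (-8)*(z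 i) ^ 2*((N : ℝ)) ^ 2*(p2) + 96*(z i) ^ 2*(z j) ^ 2 + (-40)*(z i) ^ 2*(z j) ^ 2*((N : ℝ)) + 8*(z i) ^ 2*(z j) ^ 2*((N : ℝ)) ^ 2 + (-64)*(z i) ^ 3*(z j) + 32*(z i) ^ 3*(z j)*((N : ℝ)) + 16*(z i) ^ 4 + (-24)*(z i) ^ 4*((N : ℝ)) + 8*(z i) ^ 4*((N : ℝ)) ^ 2) := by
  have hu : (∑ x : Fin N, (z i - z j) ^ 2 * (6*(p4) + (-8)*(p2) ^ 2 + (-2)*((N : ℝ))*(p4) + 2*((N : ℝ))*(p2) ^ 2 + (-16)*(z x)*(p3) + 4*(z x)*((N : ℝ))*(p3) + 36*(z x) ^ 2*(p2) + (-16)*(z x) ^ 2*((N : ℝ))*(p2) + 2*(z x) ^ 2*((N : ℝ)) ^ 2*(p2) + (-12)*(z x) ^ 4 + 10*(z x) ^ 4*((N : ℝ)) + (-2)*(z x) ^ 4*((N : ℝ)) ^ 2 + (-4)*(z j)*(p3) + (-12)*(z j)*(z x)*(p2) + 4*(z j)*(z x)*((N : ℝ))*(p2) + 24*(z j)*(z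 x) ^ 3 + (-8)*(z j)*(z x) ^ 3*((N : ℝ)) + 14*(z j) ^ 2*(p2) + (-4)*(z j) ^ 2*((N : ℝ))*(p2) + (-36)*(z j) ^ 2*(z x) ^ 2 + 14*(z j) ^ 2*(z x) ^ 2*((N : ℝ)) + (-2)*(z j) ^ 2*(z x) ^ 2*((N : ℝ)) ^ 2 + 24*(z j) ^ 3*(z x) + (-8)*(z j) ^ 3*(z x)*((N : ℝ)) + (-8)*(z j) ^ 4 + 4*(z j) ^ 4*((N : ℝ)) + (-4)*(z i)*(p3) + (-12)*(z i)*(z x)*(p2) + 4*(z i)*(z x)*((N : ℝ))*(p2) + 24*(z i)*(z x) ^ 3 + (-8)*(z i)*(z x) ^ 3*((N : ℝ)) + (-4)*(z i)*(z j)*(p2) + (-4)*(z i)*(z j)*(z x) ^ 2*((N : ℝ)) + (-4)*(z i)*(z j) ^ 2*(z x)*((N : ℝ)) + 8*(z i)*(z j) ^ 3 + 14*(z i) ^ 2*(p2) + (-4)*(z i) ^ 2*((N : ℝ))*(p2) + (-36)*(z i) ^ 2*(z x) ^ 2 + 14*(z i) ^ 2*(z x) ^ 2*((N : ℝ)) +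 (-2)*(z i) ^ 2*(z x) ^ 2*((N : ℝ)) ^ 2 + (-4)*(z i) ^ 2*(z j)*(z x)*((N : ℝ)) + (-12)*(z i) ^ 2*(z j) ^ 2 + 4*(z i) ^ 2*(z j) ^ 2*((N : ℝ)) + 24*(z i) ^ 3*(z x) + (-8)*(z i) ^ 3*(z x)*((N : ℝ)) + 8*(z i) ^ 3*(z j) + (-8)*(z i) ^ 4 + 4*(z i) ^ 4*((N : ℝ)))) = (z i - z j) ^ 2 * ((-12)*(p4) + 36*(p2) ^ 2 + 16*((N : ℝ))*(p4) + (-24)*((N : ℝ))*(p2) ^ 2 + (-4)*((N : ℝ)) ^ 2*(p4) + 4*((N : ℝ)) ^ 2*(p2) ^ 2 + 24*(z j)*(p3) + (-12)*(z j)*((N : ℝ))*(p3) + (-36)*(z j) ^ 2*(p2) + 28*(z j) ^ 2*((N : ℝ))*(p2) + (-6)*(z j) ^ 2*((N : ℝ)) ^ 2*(p2) + (-8)*(z j) ^ 4*((N : ℝ)) + 4*(z j) ^ 4*((N : ℝ)) ^ 2 + 24*(z i)*(p3) + (-12)*(z i)*((N : ℝ))*(p3) + (-8)*(z i)*(z j)*((N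 : ℝ))*(p2) + 8*(z i)*(z j) ^ 3*((N : ℝ)) + (-36)*(z i) ^ 2*(p2) + 28*(z i) ^ 2*((N : ℝ))*(p2) + (-6)*(z i) ^ 2*((N : ℝ)) ^ 2*(p2) + (-12)*(z i) ^ 2*(z j) ^ 2*((N : ℝ)) + 4*(z i) ^ 2*(z j) ^ 2*((N : ℝ)) ^ 2 + 8*(z i) ^ 3*(z j)*((N : ℝ)) + (-8)*(z i) ^ 4*((N : ℝ)) + 4*(z i) ^ 4*((N : ℝ)) ^ 2) := by
    rw [show (∑ x : Fin N, (z i - z j) ^ 2 * (6*(p4) + (-8)*(p2) ^ 2 + (-2)*((N : ℝ))*(p4) + 2*((N : ℝ))*(p2) ^ 2 + (-16)*(z x)*(p3) + 4*(z x)*((N : ℝ))*(p3) + 36*(z x) ^ 2*(p2) + (-16)*(z x) ^ 2*((N : ℝ))*(p2) + 2*(z x) ^ 2*((N : ℝ)) ^ 2*(p2) + (-12)*(z x) ^ 4 + 10*(z x) ^ 4*((N : ℝ)) + (-2)*(z x) ^ 4*((N : ℝ)) ^ 2 + (-4)*(z j)*(p3) + (-12)*(z j)*(z x)*(p2) + 4*(z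 j)*(z x)*((N : ℝ))*(p2) + 24*(z j)*(z x) ^ 3 + (-8)*(z j)*(z x) ^ 3*((N : ℝ)) + 14*(z j) ^ 2*(p2) + (-4)*(z j) ^ 2*((N : ℝ))*(p2) + (-36)*(z j) ^ 2*(z x) ^ 2 + 14*(z j) ^ 2*(z x) ^ 2*((N : ℝ)) + (-2)*(z j) ^ 2*(z x) ^ 2*((N : ℝ)) ^ 2 + 24*(z j) ^ 3*(z x) + (-8)*(z j) ^ 3*(z x)*((N : ℝ)) + (-8)*(z j) ^ 4 + 4*(z j) ^ 4*((N : ℝ)) + (-4)*(z i)*(p3) + (-12)*(z i)*(z x)*(p2) + 4*(z i)*(z x)*((N : ℝ))*(p2) + 24*(z i)*(z x) ^ 3 + (-8)*(z i)*(z x) ^ 3*((N : ℝ)) + (-4)*(z i)*(z j)*(p2) + (-4)*(z i)*(z j)*(z x) ^ 2*((N : ℝ)) + (-4)*(z i)*(z j) ^ 2*(z x)*((N : ℝ)) + 8*(z i)*(z j) ^ 3 + 14*(z i) ^ 2*(p2) + (-4)*(z i) ^ 2*((N : ℝ))*(p2) + (-36)*(z i) ^ 2*(z x) ^ 2 + 14*(z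 i) ^ 2*(z x) ^ 2*((N : ℝ)) + (-2)*(z i) ^ 2*(z x) ^ 2*((N : ℝ)) ^ 2 + (-4)*(z i) ^ 2*(z j)*(z x)*((N : ℝ)) + (-12)*(z i) ^ 2*(z j) ^ 2 + 4*(z i) ^ 2*(z j) ^ 2*((N : ℝ)) + 24*(z i) ^ 3*(z x) + (-8)*(z i) ^ 3*(z x)*((N : ℝ)) + 8*(z i) ^ 3*(z j) + (-8)*(z i) ^ 4 + 4*(z i) ^ 4*((N : ℝ))))
        = ∑ x : Fin N, (((z i - z j) ^ 2 * (6*(p4) + (-8)*(p2) ^ 2 + (-2)*((N : ℝ))*(p4) + 2*((N : ℝ))*(p2) ^ 2 + (-4)*(z j)*(p3) + 14*(z j) ^ 2*(p2) + (-4)*(z j) ^ 2*((N : ℝ))*(p2) + (-8)*(z j) ^ 4 + 4*(z j) ^ 4*((N : ℝ)) + (-4)*(z i)*(p3) + (-4)*(z i)*(z j)*(p2) + 8*(z i)*(z j) ^ 3 + 14*(z i) ^ 2*(p2) + (-4)*(z i) ^ 2*((N : ℝ))*(p2) + (-12)*(z i) ^ 2*(z j) ^ 2 + 4*(z i) ^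 2*(z j) ^ 2*((N : ℝ)) + 8*(z i) ^ 3*(z j) + (-8)*(z i) ^ 4 + 4*(z i) ^ 4*((N : ℝ)))) + ((z i - z j) ^ 2 * ((-16)*(p3) + 4*((N : ℝ))*(p3) + (-12)*(z j)*(p2) + 4*(z j)*((N : ℝ))*(p2) + 24*(z j) ^ 3 + (-8)*(z j) ^ 3*((N : ℝ)) + (-12)*(z i)*(p2) + 4*(z i)*((N : ℝ))*(p2) + (-4)*(z i)*(z j) ^ 2*((N : ℝ)) + (-4)*(z i) ^ 2*(z j)*((N : ℝ)) + 24*(z i) ^ 3 + (-8)*(z i) ^ 3*((N : ℝ)))) * z x + ((z i - z j) ^ 2 * (36*(p2) + (-16)*((N : ℝ))*(p2) + 2*((N : ℝ)) ^ 2*(p2) + (-36)*(z j) ^ 2 + 14*(z j) ^ 2*((N : ℝ)) + (-2)*(z j) ^ 2*((N : ℝ)) ^ 2 + (-4)*(z i)*(z j)*((N : ℝ)) + (-36)*(z i) ^ 2 + 14*(z i) ^ 2*((N : ℝ)) + (-2)*(z i) ^ 2*((N : ℝ)) ^ 2)) * z x ^ 2 + ((z i - z j) ^ 2 * (24*(z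 j) + (-8)*(z j)*((N : ℝ)) + 24*(z i) + (-8)*(z i)*((N : ℝ)))) * z x ^ 3 + ((z i - z j) ^ 2 * ((-12) + 10*((N : ℝ)) + (-2)*((N : ℝ)) ^ 2)) * z x ^ 4 + (0) * z x ^ 5 + (0) * z x ^ 6) from
      Finset.sum_congr rfl fun x _ => by ring]
    rw [sum_poly, hz, ← hp2, ← hp3, ← hp4, ← hp5, ← hp6]
    ring
  rw [Finset.sum_sdiff_eq_sub (Finset.subset_univ _), hu,
      Finset.sum_insert (by simp [Ne.symm hji]),
      Finset.sum_singleton]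
  ring

private lemma levelJ {N : ℕ} (z : Fin N → ℝ) (p2 p3 p4 p5 p6 : ℝ)
    (hz : ∑ x, z x = 0) (hp2 : p2 = ∑ x, z x ^ 2) (hp3 : p3 = ∑ x, z x ^ 3)
    (hp4 : p4 = ∑ x, z x ^ 4) (hp5 : p5 = ∑ x, z x ^ 5) (hp6 : p6 = ∑ x, z x ^ 6)
    (i : Fin N)
     :
    (∑ j ∈ univ \ {i}, (z i - z j) ^ 2 * ((-24)*(p4) + 52*(p2) ^ 2 + 20*((N : ℝ))*(p4) + (-28)*((N : ℝ))*(p2) ^ 2 + (-4)*((N : ℝ)) ^ 2*(p4) + 4*((N : ℝ)) ^ 2*(p2) ^ 2 + 48*(z j)*(p3) + (-16)*(z j)*((N : ℝ))*(p3) + (-88)*(z j) ^ 2*(p2) + 48*(z j) ^ 2*((N : ℝ))*(p2) + (-8)*(z j) ^ 2*((N : ℝ)) ^ 2*(p2) + 16*(z j) ^ 4 + (-24)*(z j) ^ 4*((N : ℝ)) + 8*(z j) ^ 4*((N : ℝ)) ^ 2 + 48*(z i)*(p3) + (-16)*(z i)*((N : ℝ))*(p3) + 32*(z i)*(z j)*(p2)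 + (-16)*(z i)*(z j)*((N : ℝ))*(p2) + (-64)*(z i)*(z j) ^ 3 + 32*(z i)*(z j) ^ 3*((N : ℝ)) + (-88)*(z i) ^ 2*(p2) + 48*(z i) ^ 2*((N : ℝ))*(p2) + (-8)*(z i) ^ 2*((N : ℝ)) ^ 2*(p2) + 96*(z i) ^ 2*(z j) ^ 2 + (-40)*(z i) ^ 2*(z j) ^ 2*((N : ℝ)) + 8*(z i) ^ 2*(z j) ^ 2*((N : ℝ)) ^ 2 + (-64)*(z i) ^ 3*(z j) + 32*(z i) ^ 3*(z j)*((N : ℝ)) + 16*(z i) ^ 4 + (-24)*(z i) ^ 4*((N : ℝ)) + 8*(z i) ^ 4*((N : ℝ)) ^ 2))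
    = (16*(p6) + 48*(p3) ^ 2 + (-112)*(p2)*(p4) + 52*(p2) ^ 3 + (-24)*((N : ℝ))*(p6) + (-16)*((N : ℝ))*(p3) ^ 2 + 68*((N : ℝ))*(p2)*(p4) + (-28)*((N : ℝ))*(p2) ^ 3 + 8*((N : ℝ)) ^ 2*(p6) + (-12)*((N : ℝ)) ^ 2*(p2)*(p4) + 4*((N : ℝ)) ^ 2*(p2) ^ 3 + (-96)*(z i)*(p5) + 160*(z i)*(p2)*(p3) + 80*(z i)*((N : ℝ))*(p5) + (-96)*(z i)*((N : ℝ))*(p2)*(p3) + (-16)*(z i)*((N : ℝ)) ^ 2*(p5) + 16*(z i)*((N : ℝ)) ^ 2*(p2)*(p3) + 240*(z i) ^ 2*(p4) + (-240)*(z i) ^ 2*(p2) ^ 2 + (-152)*(z i) ^ 2*((N : ℝ))*(p4) + 180*(z i) ^ 2*((N : ℝ))*(p2) ^ 2 + 36*(z i) ^ 2*((N : ℝ)) ^ 2*(p4) + (-44)*(z i) ^ 2*((N : ℝ)) ^ 2*(p2) ^ 2 + (-4)*(z i) ^ 2*((N : ℝ)) ^ 3*(p4) + 4*(z i) ^ 2*((N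 : ℝ)) ^ 3*(p2) ^ 2 + (-320)*(z i) ^ 3*(p3) + 192*(z i) ^ 3*((N : ℝ))*(p3) + (-32)*(z i) ^ 3*((N : ℝ)) ^ 2*(p3) + 240*(z i) ^ 4*(p2) + (-216)*(z i) ^ 4*((N : ℝ))*(p2) + 64*(z i) ^ 4*((N : ℝ)) ^ 2*(p2) + (-8)*(z i) ^ 4*((N : ℝ)) ^ 3*(p2) + 16*(z i) ^ 6*((N : ℝ)) + (-24)*(z i) ^ 6*((N : ℝ)) ^ 2 + 8*(z i) ^ 6*((N : ℝ)) ^ 3) := by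
  have hu : (∑ x : Fin N, (z i - z x) ^ 2 * ((-24)*(p4) + 52*(p2) ^ 2 + 20*((N : ℝ))*(p4) + (-28)*((N : ℝ))*(p2) ^ 2 + (-4)*((N : ℝ)) ^ 2*(p4) + 4*((N : ℝ)) ^ 2*(p2) ^ 2 + 48*(z x)*(p3) + (-16)*(z x)*((N : ℝ))*(p3) + (-88)*(z x) ^ 2*(p2) + 48*(z x) ^ 2*((N : ℝ))*(p2) + (-8)*(z x) ^ 2*((N : ℝ)) ^ 2*(p2) + 16*(z x) ^ 4 + (-24)*(z x) ^ 4*((N : ℝ)) + 8*(z x) ^ 4*((N : ℝ)) ^ 2 + 48*(z i)*(p3) + (-16)*(z i)*((N : ℝ))*(p3) + 32*(z i)*(z x)*(p2) + (-16)*(z i)*(z x)*((N : ℝ))*(p2) + (-64)*(z i)*(z x) ^ 3 + 32*(z i)*(z x) ^ 3*((N : ℝ)) + (-88)*(z i) ^ 2*(p2) + 48*(z i) ^ 2*((N : ℝ))*(p2) + (-8)*(z i) ^ 2*((N : ℝ)) ^ 2*(p2) + 96*(z i) ^ 2*(z x) ^ 2 + (-40)*(z i) ^ 2*(z x) ^ 2*((N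 : ℝ)) + 8*(z i) ^ 2*(z x) ^ 2*((N : ℝ)) ^ 2 + (-64)*(z i) ^ 3*(z x) + 32*(z i) ^ 3*(z x)*((N : ℝ)) + 16*(z i) ^ 4 + (-24)*(z i) ^ 4*((N : ℝ)) + 8*(z i) ^ 4*((N : ℝ)) ^ 2)) = (16*(p6) + 48*(p3) ^ 2 + (-112)*(p2)*(p4) + 52*(p2) ^ 3 + (-24)*((N : ℝ))*(p6) + (-16)*((N : ℝ))*(p3) ^ 2 + 68*((N : ℝ))*(p2)*(p4) + (-28)*((N : ℝ))*(p2) ^ 3 + 8*((N : ℝ)) ^ 2*(p6) + (-12)*((N : ℝ)) ^ 2*(p2)*(p4) + 4*((N : ℝ)) ^ 2*(p2) ^ 3 + (-96)*(z i)*(p5) + 160*(z i)*(p2)*(p3) + 80*(z i)*((N : ℝ))*(p5) + (-96)*(z i)*((N : ℝ))*(p2)*(p3) + (-16)*(z i)*((N : ℝ)) ^ 2*(p5) + 16*(z i)*((N : ℝ)) ^ 2*(p2)*(p3) + 240*(z i) ^ 2*(p4) + (-240)*(z i) ^ 2*(p2) ^ 2 + (-152)*(z i) ^ 2*((N : ℝ))*(p4)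 + 180*(z i) ^ 2*((N : ℝ))*(p2) ^ 2 + 36*(z i) ^ 2*((N : ℝ)) ^ 2*(p4) + (-44)*(z i) ^ 2*((N : ℝ)) ^ 2*(p2) ^ 2 + (-4)*(z i) ^ 2*((N : ℝ)) ^ 3*(p4) + 4*(z i) ^ 2*((N : ℝ)) ^ 3*(p2) ^ 2 + (-320)*(z i) ^ 3*(p3) + 192*(z i) ^ 3*((N : ℝ))*(p3) + (-32)*(z i) ^ 3*((N : ℝ)) ^ 2*(p3) + 240*(z i) ^ 4*(p2) + (-216)*(z i) ^ 4*((N : ℝ))*(p2) + 64*(z i) ^ 4*((N : ℝ)) ^ 2*(p2) + (-8)*(z i) ^ 4*((N : ℝ)) ^ 3*(p2) + 16*(z i) ^ 6*((N : ℝ)) + (-24)*(z i) ^ 6*((N : ℝ)) ^ 2 + 8*(z i) ^ 6*((N : ℝ)) ^ 3) := by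
    rw [show (∑ x : Fin N, (z i - z x) ^ 2 * ((-24)*(p4) + 52*(p2) ^ 2 + 20*((N : ℝ))*(p4) + (-28)*((N : ℝ))*(p2) ^ 2 + (-4)*((N : ℝ)) ^ 2*(p4) + 4*((N : ℝ)) ^ 2*(p2) ^ 2 + 48*(z x)*(p3) + (-16)*(z x)*((N : ℝ))*(p3) + (-88)*(z x) ^ 2*(p2) + 48*(z x) ^ 2*((N : ℝ))*(p2) + (-8)*(z x) ^ 2*((N : ℝ)) ^ 2*(p2) + 16*(z x) ^ 4 + (-24)*(z x) ^ 4*((N : ℝ)) + 8*(z x) ^ 4*((N : ℝ)) ^ 2 + 48*(z i)*(p3) + (-16)*(z i)*((N : ℝ))*(p3) + 32*(z i)*(z x)*(p2) + (-16)*(z i)*(z x)*((N : ℝ))*(p2) + (-64)*(z i)*(z x) ^ 3 + 32*(z i)*(z x) ^ 3*((N : ℝ)) + (-88)*(z i) ^ 2*(p2) + 48*(z i) ^ 2*((N : ℝ))*(p2) + (-8)*(z i) ^ 2*((N : ℝ)) ^ 2*(p2) + 96*(z i) ^ 2*(z x) ^ 2 + (-40)*(z i) ^ 2*(z x) ^ 2*((N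 : ℝ)) + 8*(z i) ^ 2*(z x) ^ 2*((N : ℝ)) ^ 2 + (-64)*(z i) ^ 3*(z x) + 32*(z i) ^ 3*(z x)*((N : ℝ)) + 16*(z i) ^ 4 + (-24)*(z i) ^ 4*((N : ℝ)) + 8*(z i) ^ 4*((N : ℝ)) ^ 2))
        = ∑ x : Fin N, ((((-24)*(z i) ^ 2*(p4) + 52*(z i) ^ 2*(p2) ^ 2 + 20*(z i) ^ 2*((N : ℝ))*(p4) + (-28)*(z i) ^ 2*((N : ℝ))*(p2) ^ 2 + (-4)*(z i) ^ 2*((N : ℝ)) ^ 2*(p4) + 4*(z i) ^ 2*((N : ℝ)) ^ 2*(p2) ^ 2 + 48*(z i) ^ 3*(p3) + (-16)*(z i) ^ 3*((N : ℝ))*(p3) + (-88)*(z i) ^ 4*(p2) + 48*(z i) ^ 4*((N : ℝ))*(p2) + (-8)*(z i) ^ 4*((N : ℝ)) ^ 2*(p2) + 16*(z i) ^ 6 + (-24)*(z i) ^ 6*((N : ℝ)) + 8*(z i) ^ 6*((N : ℝ)) ^ 2)) + ((48*(z i)*(p4) + (-104)*(z i)*(p2) ^ 2 + (-40)*(z i)*((N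 : ℝ))*(p4) + 56*(z i)*((N : ℝ))*(p2) ^ 2 + 8*(z i)*((N : ℝ)) ^ 2*(p4) + (-8)*(z i)*((N : ℝ)) ^ 2*(p2) ^ 2 + (-48)*(z i) ^ 2*(p3) + 16*(z i) ^ 2*((N : ℝ))*(p3) + 208*(z i) ^ 3*(p2) + (-112)*(z i) ^ 3*((N : ℝ))*(p2) + 16*(z i) ^ 3*((N : ℝ)) ^ 2*(p2) + (-96)*(z i) ^ 5 + 80*(z i) ^ 5*((N : ℝ)) + (-16)*(z i) ^ 5*((N : ℝ)) ^ 2)) * z x + (((-24)*(p4) + 52*(p2) ^ 2 + 20*((N : ℝ))*(p4) + (-28)*((N : ℝ))*(p2) ^ 2 + (-4)*((N : ℝ)) ^ 2*(p4) + 4*((N : ℝ)) ^ 2*(p2) ^ 2 + (-48)*(z i)*(p3) + 16*(z i)*((N : ℝ))*(p3) + (-240)*(z i) ^ 2*(p2) + 128*(z i) ^ 2*((N : ℝ))*(p2) + (-16)*(z i) ^ 2*((N : ℝ)) ^ 2*(p2) + 240*(z i) ^ 4 + (-128)*(z i) ^ 4*((N : ℝ)) + 16*(z i) ^ 4*((N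 : ℝ)) ^ 2)) * z x ^ 2 + ((48*(p3) + (-16)*((N : ℝ))*(p3) + 208*(z i)*(p2) + (-112)*(z i)*((N : ℝ))*(p2) + 16*(z i)*((N : ℝ)) ^ 2*(p2) + (-320)*(z i) ^ 3 + 144*(z i) ^ 3*((N : ℝ)) + (-16)*(z i) ^ 3*((N : ℝ)) ^ 2)) * z x ^ 3 + (((-88)*(p2) + 48*((N : ℝ))*(p2) + (-8)*((N : ℝ)) ^ 2*(p2) + 240*(z i) ^ 2 + (-128)*(z i) ^ 2*((N : ℝ)) + 16*(z i) ^ 2*((N : ℝ)) ^ 2)) * z x ^ 4 + (((-96)*(z i) + 80*(z i)*((N : ℝ)) + (-16)*(z i)*((N : ℝ)) ^ 2)) * z x ^ 5 + ((16 + (-24)*((N : ℝ)) + 8*((N : ℝ)) ^ 2)) * z x ^ 6) from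
      Finset.sum_congr rfl fun x _ => by ring]
    rw [sum_poly, hz, ← hp2, ← hp3, ← hp4, ← hp5, ← hp6]
    ring
  rw [Finset.sum_sdiff_eq_sub (Finset.subset_univ _), hu,
      Finset.sum_singleton]
  ring

private lemma levelI {N : ℕ} (z : Fin N → ℝ) (p2 p3 p4 p5 p6 : ℝ)
    (hz : ∑ x, z x = 0) (hp2 : p2 = ∑ x, z x ^ 2) (hp3 : p3 = ∑ x, z x ^ 3)
    (hp4 : p4 = ∑ x, z x ^ 4) (hp5 : p5 = ∑ x, z x ^ 5) (hp6 : p6 = ∑ x, z x ^ 6)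
    :
    (∑ i : Fin N, (16*(p6) + 48*(p3) ^ 2 + (-112)*(p2)*(p4) + 52*(p2) ^ 3 + (-24)*((N : ℝ))*(p6) + (-16)*((N : ℝ))*(p3) ^ 2 + 68*((N : ℝ))*(p2)*(p4) + (-28)*((N : ℝ))*(p2) ^ 3 + 8*((N : ℝ)) ^ 2*(p6) + (-12)*((N : ℝ)) ^ 2*(p2)*(p4) + 4*((N : ℝ)) ^ 2*(p2) ^ 3 + (-96)*(z i)*(p5) + 160*(z i)*(p2)*(p3) + 80*(z i)*((N : ℝ))*(p5) + (-96)*(z i)*((N : ℝ))*(p2)*(p3) + (-16)*(z i)*((N : ℝ)) ^ 2*(p5) + 16*(z i)*((N : ℝ)) ^ 2*(p2)*(p3) + 240*(z i) ^ 2*(p4) + (-240)*(z i) ^ 2*(p2) ^ 2 + (-152)*(z i) ^ 2*((N : ℝ))*(p4) + 180*(z i) ^ 2*((N : ℝ))*(p2) ^ 2 + 36*(z i) ^ 2*((N : ℝ)) ^ 2*(p4) + (-44)*(z i) ^ 2*((N : ℝ)) ^ 2*(p2) ^ 2 + (-4)*(z i) ^ 2*((N : ℝ)) ^ 3*(p4)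 + 4*(z i) ^ 2*((N : ℝ)) ^ 3*(p2) ^ 2 + (-320)*(z i) ^ 3*(p3) + 192*(z i) ^ 3*((N : ℝ))*(p3) + (-32)*(z i) ^ 3*((N : ℝ)) ^ 2*(p3) + 240*(z i) ^ 4*(p2) + (-216)*(z i) ^ 4*((N : ℝ))*(p2) + 64*(z i) ^ 4*((N : ℝ)) ^ 2*(p2) + (-8)*(z i) ^ 4*((N : ℝ)) ^ 3*(p2) + 16*(z i) ^ 6*((N : ℝ)) + (-24)*(z i) ^ 6*((N : ℝ)) ^ 2 + 8*(z i) ^ 6*((N : ℝ)) ^ 3))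
    = ((-320)*(p3) ^ 2 + 480*(p2)*(p4) + (-240)*(p2) ^ 3 + 32*((N : ℝ))*(p6) + 240*((N : ℝ))*(p3) ^ 2 + (-480)*((N : ℝ))*(p2)*(p4) + 232*((N : ℝ))*(p2) ^ 3 + (-48)*((N : ℝ)) ^ 2*(p6) + (-48)*((N : ℝ)) ^ 2*(p3) ^ 2 + 168*((N : ℝ)) ^ 2*(p2)*(p4) + (-72)*((N : ℝ)) ^ 2*(p2) ^ 3 + 16*((N : ℝ)) ^ 3*(p6) + (-24)*((N : ℝ)) ^ 3*(p2)*(p4) + 8*((N : ℝ)) ^ 3*(p2) ^ 3) := by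
  have hu : (∑ x : Fin N, (16*(p6) + 48*(p3) ^ 2 + (-112)*(p2)*(p4) + 52*(p2) ^ 3 + (-24)*((N : ℝ))*(p6) + (-16)*((N : ℝ))*(p3) ^ 2 + 68*((N : ℝ))*(p2)*(p4) + (-28)*((N : ℝ))*(p2) ^ 3 + 8*((N : ℝ)) ^ 2*(p6) + (-12)*((N : ℝ)) ^ 2*(p2)*(p4) + 4*((N : ℝ)) ^ 2*(p2) ^ 3 + (-96)*(z x)*(p5) + 160*(z x)*(p2)*(p3) + 80*(z x)*((N : ℝ))*(p5) + (-96)*(z x)*((N : ℝ))*(p2)*(p3) + (-16)*(z x)*((N : ℝ)) ^ 2*(p5) + 16*(z x)*((N : ℝ)) ^ 2*(p2)*(p3) + 240*(z x) ^ 2*(p4) + (-240)*(z x) ^ 2*(p2) ^ 2 + (-152)*(z x) ^ 2*((N : ℝ))*(p4) + 180*(z x) ^ 2*((N : ℝ))*(p2) ^ 2 + 36*(z x) ^ 2*((N : ℝ)) ^ 2*(p4) + (-44)*(z x) ^ 2*((N : ℝ)) ^ 2*(p2) ^ 2 + (-4)*(z x) ^ 2*((N : ℝ)) ^ 3*(p4)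 + 4*(z x) ^ 2*((N : ℝ)) ^ 3*(p2) ^ 2 + (-320)*(z x) ^ 3*(p3) + 192*(z x) ^ 3*((N : ℝ))*(p3) + (-32)*(z x) ^ 3*((N : ℝ)) ^ 2*(p3) + 240*(z x) ^ 4*(p2) + (-216)*(z x) ^ 4*((N : ℝ))*(p2) + 64*(z x) ^ 4*((N : ℝ)) ^ 2*(p2) + (-8)*(z x) ^ 4*((N : ℝ)) ^ 3*(p2) + 16*(z x) ^ 6*((N : ℝ)) + (-24)*(z x) ^ 6*((N : ℝ)) ^ 2 + 8*(z x) ^ 6*((N : ℝ)) ^ 3)) = ((-320)*(p3) ^ 2 + 480*(p2)*(p4) + (-240)*(p2) ^ 3 + 32*((N : ℝ))*(p6) + 240*((N : ℝ))*(p3) ^ 2 + (-480)*((N : ℝ))*(p2)*(p4) + 232*((N : ℝ))*(p2) ^ 3 + (-48)*((N : ℝ)) ^ 2*(p6) + (-48)*((N : ℝ)) ^ 2*(p3) ^ 2 + 168*((N : ℝ)) ^ 2*(p2)*(p4) + (-72)*((N : ℝ)) ^ 2*(p2) ^ 3 + 16*((N : ℝ)) ^ 3*(p6) + (-24)*((N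 : ℝ)) ^ 3*(p2)*(p4) + 8*((N : ℝ)) ^ 3*(p2) ^ 3) := by
    rw [show (∑ x : Fin N, (16*(p6) + 48*(p3) ^ 2 + (-112)*(p2)*(p4) + 52*(p2) ^ 3 + (-24)*((N : ℝ))*(p6) + (-16)*((N : ℝ))*(p3) ^ 2 + 68*((N : ℝ))*(p2)*(p4) + (-28)*((N : ℝ))*(p2) ^ 3 + 8*((N : ℝ)) ^ 2*(p6) + (-12)*((N : ℝ)) ^ 2*(p2)*(p4) + 4*((N : ℝ)) ^ 2*(p2) ^ 3 + (-96)*(z x)*(p5) + 160*(z x)*(p2)*(p3) + 80*(z x)*((N : ℝ))*(p5) + (-96)*(z x)*((N : ℝ))*(p2)*(p3) + (-16)*(z x)*((N : ℝ)) ^ 2*(p5) + 16*(z x)*((N : ℝ)) ^ 2*(p2)*(p3) + 240*(z x) ^ 2*(p4) + (-240)*(z x) ^ 2*(p2) ^ 2 + (-152)*(z x) ^ 2*((N : ℝ))*(p4) + 180*(z x) ^ 2*((N : ℝ))*(p2) ^ 2 + 36*(z x) ^ 2*((N : ℝ)) ^ 2*(p4) + (-44)*(z x) ^ 2*((N : ℝ))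 ^ 2*(p2) ^ 2 + (-4)*(z x) ^ 2*((N : ℝ)) ^ 3*(p4) + 4*(z x) ^ 2*((N : ℝ)) ^ 3*(p2) ^ 2 + (-320)*(z x) ^ 3*(p3) + 192*(z x) ^ 3*((N : ℝ))*(p3) + (-32)*(z x) ^ 3*((N : ℝ)) ^ 2*(p3) + 240*(z x) ^ 4*(p2) + (-216)*(z x) ^ 4*((N : ℝ))*(p2) + 64*(z x) ^ 4*((N : ℝ)) ^ 2*(p2) + (-8)*(z x) ^ 4*((N : ℝ)) ^ 3*(p2) + 16*(z x) ^ 6*((N : ℝ)) + (-24)*(z x) ^ 6*((N : ℝ)) ^ 2 + 8*(z x) ^ 6*((N : ℝ)) ^ 3))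
        = ∑ x : Fin N, (((16*(p6) + 48*(p3) ^ 2 + (-112)*(p2)*(p4) + 52*(p2) ^ 3 + (-24)*((N : ℝ))*(p6) + (-16)*((N : ℝ))*(p3) ^ 2 + 68*((N : ℝ))*(p2)*(p4) + (-28)*((N : ℝ))*(p2) ^ 3 + 8*((N : ℝ)) ^ 2*(p6) + (-12)*((N : ℝ)) ^ 2*(p2)*(p4) + 4*((N : ℝ)) ^ 2*(p2) ^ 3)) + (((-96)*(p5) + 160*(p2)*(p3) + 80*((N : ℝ))*(p5) + (-96)*((N : ℝ))*(p2)*(p3) + (-16)*((N : ℝ)) ^ 2*(p5) + 16*((N : ℝ)) ^ 2*(p2)*(p3))) * z x + ((240*(p4) + (-240)*(p2) ^ 2 + (-152)*((N : ℝ))*(p4) + 180*((N : ℝ))*(p2) ^ 2 + 36*((N : ℝ)) ^ 2*(p4) + (-44)*((N : ℝ)) ^ 2*(p2) ^ 2 + (-4)*((N : ℝ)) ^ 3*(p4) + 4*((N : ℝ)) ^ 3*(p2) ^ 2)) * z x ^ 2 + (((-320)*(p3) + 192*((N : ℝ))*(p3) + (-32)*((N : ℝ)) ^ 2*(p3)))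 * z x ^ 3 + ((240*(p2) + (-216)*((N : ℝ))*(p2) + 64*((N : ℝ)) ^ 2*(p2) + (-8)*((N : ℝ)) ^ 3*(p2))) * z x ^ 4 + (0) * z x ^ 5 + ((16*((N : ℝ)) + (-24)*((N : ℝ)) ^ 2 + 8*((N : ℝ)) ^ 3)) * z x ^ 6) from
      Finset.sum_congr rfl fun x _ => by ring]
    rw [sum_poly, hz, ← hp2, ← hp3, ← hp4, ← hp5, ← hp6]
    ring
  rw [hu]

theorem ordered_matching_square_graph_sum
    (n : ℕ) (hn : 1 ≤ n) (z : Fin n → ℝ) (hz : ∑ i, z i = 0)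
    (p₂ p₃ p₄ p₆ : ℝ)
    (hp₂ : p₂ = ∑ i, z i ^ 2) (hp₃ : p₃ = ∑ i, z i ^ 3)
    (hp₄ : p₄ = ∑ i, z i ^ 4) (hp₆ : p₆ = ∑ i, z i ^ 6) :
    (∑ f : Fin 6 ↪ Fin n,
        (z (f 0) - z (f 1)) ^ 2 * (z (f 2) - z (f 3)) ^ 2 * (z (f 4) - z (f 5)) ^ 2)
      = 8 * ((n : ℝ) - 2) * ((n : ℝ) ^ 2 - 7 * (n : ℝ) + 15) * p₂ ^ 3
        - 16 * (3 * (n : ℝ) ^ 2 - 15 * (n : ℝ) + 20) * p₃ ^ 2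
        - 24 * ((n : ℝ) - 2) * ((n : ℝ) ^ 2 - 5 * (n : ℝ) + 10) * p₂ * p₄
        + 16 * (n : ℝ) * ((n : ℝ) - 1) * ((n : ℝ) - 2) * p₆ := by
  classical
  calc (∑ f : Fin 6 ↪ Fin n,
        (z (f 0) - z (f 1)) ^ 2 * (z (f 2) - z (f 3)) ^ 2 * (z (f 4) - z (f 5)) ^ 2)
      = ∑ i : Fin n, ∑ j ∈ univ \ {i}, ∑ k ∈ univ \ {i, j}, ∑ l ∈ univ \ {i, j, k}, ∑ m ∈ univ \ {i, j, k, l}, ∑ s ∈ univ \ {i, j, k, l, m}, ((z i - z j) ^ 2 * (z k - z l) ^ 2 * (z m - z s) ^ 2) := sum_emb (fun a b c d e g => (z a - z b) ^ 2 * (z c - z d) ^ 2 * (z e - z g) ^ 2)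
    _ = ∑ i : Fin n, ∑ j ∈ univ \ {i}, ∑ k ∈ univ \ {i, j}, ∑ l ∈ univ \ {i, j, k}, ∑ m ∈ univ \ {i, j, k, l}, ((z i - z j) ^ 2 * (z k - z l) ^ 2 * (1*(p₂) + (-4)*(z m) ^ 2 + 1*(z m) ^ 2*((n : ℝ)) + 2*(z l)*(z m) + (-1)*(z l) ^ 2 + 2*(z k)*(z m) + (-1)*(z k) ^ 2 + 2*(z j)*(z m) + (-1)*(z j) ^ 2 + 2*(z i)*(z m) + (-1)*(z i) ^ 2)) := by
      refine Finset.sum_congr rfl fun i _ => ?_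
      refine Finset.sum_congr rfl fun j hj => ?_
      refine Finset.sum_congr rfl fun k hk => ?_
      refine Finset.sum_congr rfl fun l hl => ?_
      refine Finset.sum_congr rfl fun m hm => ?_
      have hji : j ≠ i := by simpa using hj
      have hk' : k ≠ i ∧ k ≠ j := by simpa [not_or] using hk
      have hl' : l ≠ i ∧ l ≠ j ∧ l ≠ k := by simpa [not_or] using hl
      have hm' : m ≠ i ∧ m ≠ j ∧ m ≠ k ∧ m ≠ l := by simpa [not_or] using hm
      exact levelS z p₂ p₃ p₄ (∑ x, z x ^ 5) p₆ hz hp₂ hp₃ hp₄ rfl hp₆ i j k l m hji hk'.1 hk'.2 hl'.1 hl'.2.1 hl'.2.2 hm'.1 hm'.2.1 hm'.2.2.1 hm'.2.2.2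
    _ = ∑ i : Fin n, ∑ j ∈ univ \ {i}, ∑ k ∈ univ \ {i, j}, ∑ l ∈ univ \ {i, j, k}, ((z i - z j) ^ 2 * (z k - z l) ^ 2 * ((-8)*(p₂) + 2*((n : ℝ))*(p₂) + 6*(z l) ^ 2 + (-2)*(z l) ^ 2*((n : ℝ)) + (-4)*(z k)*(z l) + 6*(z k) ^ 2 + (-2)*(z k) ^ 2*((n : ℝ)) + (-4)*(z j)*(z l) + (-4)*(z j)*(z k) + 6*(z j) ^ 2 + (-2)*(z j) ^ 2*((n : ℝ)) + (-4)*(z i)*(z l) + (-4)*(z i)*(z k) + (-4)*(z i)*(z j) + 6*(z i) ^ 2 + (-2)*(z i) ^ 2*((n : ℝ)))) := by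
      refine Finset.sum_congr rfl fun i _ => ?_
      refine Finset.sum_congr rfl fun j hj => ?_
      refine Finset.sum_congr rfl fun k hk => ?_
      refine Finset.sum_congr rfl fun l hl => ?_
      have hji : j ≠ i := by simpa using hj
      have hk' : k ≠ i ∧ k ≠ j := by simpa [not_or] using hk
      have hl' : l ≠ i ∧ l ≠ j ∧ l ≠ k := by simpa [not_or] using hl
      exact levelM z p₂ p₃ p₄ (∑ x, z x ^ 5) p₆ hz hp₂ hp₃ hp₄ rfl hp₆ i j k l hji hk'.1 hk'.2 hl'.1 hl'.2.1 hl'.2.2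
    _ = ∑ i : Fin n, ∑ j ∈ univ \ {i}, ∑ k ∈ univ \ {i, j}, ((z i - z j) ^ 2 * (6*(p₄) + (-8)*(p₂) ^ 2 + (-2)*((n : ℝ))*(p₄) + 2*((n : ℝ))*(p₂) ^ 2 + (-16)*(z k)*(p₃) + 4*(z k)*((n : ℝ))*(p₃) + 36*(z k) ^ 2*(p₂) + (-16)*(z k) ^ 2*((n : ℝ))*(p₂) + 2*(z k) ^ 2*((n : ℝ)) ^ 2*(p₂) + (-12)*(z k) ^ 4 + 10*(z k) ^ 4*((n : ℝ)) + (-2)*(z k) ^ 4*((n : ℝ)) ^ 2 + (-4)*(z j)*(p₃) + (-12)*(z j)*(z k)*(p₂) + 4*(z j)*(z k)*((n : ℝ))*(p₂) + 24*(z j)*(z k) ^ 3 + (-8)*(z j)*(z k) ^ 3*((n : ℝ)) + 14*(z j) ^ 2*(p₂) + (-4)*(z j) ^ 2*((n : ℝ))*(p₂) + (-36)*(z j) ^ 2*(z k) ^ 2 + 14*(z j) ^ 2*(z k) ^ 2*((n : ℝ)) + (-2)*(z j) ^ 2*(z k) ^ 2*((n : ℝ)) ^ 2 + 24*(z j) ^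 3*(z k) + (-8)*(z j) ^ 3*(z k)*((n : ℝ)) + (-8)*(z j) ^ 4 + 4*(z j) ^ 4*((n : ℝ)) + (-4)*(z i)*(p₃) + (-12)*(z i)*(z k)*(p₂) + 4*(z i)*(z k)*((n : ℝ))*(p₂) + 24*(z i)*(z k) ^ 3 + (-8)*(z i)*(z k) ^ 3*((n : ℝ)) + (-4)*(z i)*(z j)*(p₂) + (-4)*(z i)*(z j)*(z k) ^ 2*((n : ℝ)) + (-4)*(z i)*(z j) ^ 2*(z k)*((n : ℝ)) + 8*(z i)*(z j) ^ 3 + 14*(z i) ^ 2*(p₂) + (-4)*(z i) ^ 2*((n : ℝ))*(p₂) + (-36)*(z i) ^ 2*(z k) ^ 2 + 14*(z i) ^ 2*(z k) ^ 2*((n : ℝ)) + (-2)*(z i) ^ 2*(z k) ^ 2*((n : ℝ)) ^ 2 + (-4)*(z i) ^ 2*(z j)*(z k)*((n : ℝ)) + (-12)*(z i) ^ 2*(z j) ^ 2 + 4*(z i) ^ 2*(z j) ^ 2*((n : ℝ)) + 24*(z i) ^ 3*(z k) + (-8)*(z i) ^ 3*(z k)*((n : ℝ)) + 8*(z i) ^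 3*(z j) + (-8)*(z i) ^ 4 + 4*(z i) ^ 4*((n : ℝ)))) := by
      refine Finset.sum_congr rfl fun i _ => ?_
      refine Finset.sum_congr rfl fun j hj => ?_
      refine Finset.sum_congr rfl fun k hk => ?_
      have hji : j ≠ i := by simpa using hj
      have hk' : k ≠ i ∧ k ≠ j := by simpa [not_or] using hk
      exact levelL z p₂ p₃ p₄ (∑ x, z x ^ 5) p₆ hz hp₂ hp₃ hp₄ rfl hp₆ i j k hji hk'.1 hk'.2
    _ = ∑ i : Fin n, ∑ j ∈ univ \ {i}, ((z i - z j) ^ 2 * ((-24)*(p₄) + 52*(p₂) ^ 2 + 20*((n : ℝ))*(p₄) + (-28)*((n : ℝ))*(p₂) ^ 2 + (-4)*((n : ℝ)) ^ 2*(p₄) + 4*((n : ℝ)) ^ 2*(p₂) ^ 2 + 48*(z j)*(p₃) + (-16)*(z j)*((n : ℝ))*(p₃) + (-88)*(z j) ^ 2*(p₂) + 48*(z j) ^ 2*((n : ℝ))*(p₂) + (-8)*(z j) ^ 2*((n : ℝ)) ^ 2*(p₂) + 16*(z j) ^ 4 + (-24)*(z j) ^ 4*((n : ℝ)) + 8*(z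 j) ^ 4*((n : ℝ)) ^ 2 + 48*(z i)*(p₃) + (-16)*(z i)*((n : ℝ))*(p₃) + 32*(z i)*(z j)*(p₂) + (-16)*(z i)*(z j)*((n : ℝ))*(p₂) + (-64)*(z i)*(z j) ^ 3 + 32*(z i)*(z j) ^ 3*((n : ℝ)) + (-88)*(z i) ^ 2*(p₂) + 48*(z i) ^ 2*((n : ℝ))*(p₂) + (-8)*(z i) ^ 2*((n : ℝ)) ^ 2*(p₂) + 96*(z i) ^ 2*(z j) ^ 2 + (-40)*(z i) ^ 2*(z j) ^ 2*((n : ℝ)) + 8*(z i) ^ 2*(z j) ^ 2*((n : ℝ)) ^ 2 + (-64)*(z i) ^ 3*(z j) + 32*(z i) ^ 3*(z j)*((n : ℝ)) + 16*(z i) ^ 4 + (-24)*(z i) ^ 4*((n : ℝ)) + 8*(z i) ^ 4*((n : ℝ)) ^ 2)) := by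
      refine Finset.sum_congr rfl fun i _ => ?_
      refine Finset.sum_congr rfl fun j hj => ?_
      have hji : j ≠ i := by simpa using hj
      exact levelK z p₂ p₃ p₄ (∑ x, z x ^ 5) p₆ hz hp₂ hp₃ hp₄ rfl hp₆ i j hji
    _ = ∑ i : Fin n, ((16*(p₆) + 48*(p₃) ^ 2 + (-112)*(p₂)*(p₄) + 52*(p₂) ^ 3 + (-24)*((n : ℝ))*(p₆) + (-16)*((n : ℝ))*(p₃) ^ 2 + 68*((n : ℝ))*(p₂)*(p₄) + (-28)*((n : ℝ))*(p₂) ^ 3 + 8*((n : ℝ)) ^ 2*(p₆) + (-12)*((n : ℝ)) ^ 2*(p₂)*(p₄) + 4*((n : ℝ)) ^ 2*(p₂) ^ 3 + (-96)*(z i)*((∑ x, z x ^ 5)) + 160*(z i)*(p₂)*(p₃) + 80*(z i)*((n : ℝ))*((∑ x, z x ^ 5)) + (-96)*(z i)*((n : ℝ))*(p₂)*(p₃) + (-16)*(z i)*((n : ℝ)) ^ 2*((∑ x, z x ^ 5)) + 16*(z i)*((n : ℝ)) ^ 2*(p₂)*(p₃) + 240*(z i) ^ 2*(p₄) + (-240)*(z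 i) ^ 2*(p₂) ^ 2 + (-152)*(z i) ^ 2*((n : ℝ))*(p₄) + 180*(z i) ^ 2*((n : ℝ))*(p₂) ^ 2 + 36*(z i) ^ 2*((n : ℝ)) ^ 2*(p₄) + (-44)*(z i) ^ 2*((n : ℝ)) ^ 2*(p₂) ^ 2 + (-4)*(z i) ^ 2*((n : ℝ)) ^ 3*(p₄) + 4*(z i) ^ 2*((n : ℝ)) ^ 3*(p₂) ^ 2 + (-320)*(z i) ^ 3*(p₃) + 192*(z i) ^ 3*((n : ℝ))*(p₃) + (-32)*(z i) ^ 3*((n : ℝ)) ^ 2*(p₃) + 240*(z i) ^ 4*(p₂) + (-216)*(z i) ^ 4*((n : ℝ))*(p₂) + 64*(z i) ^ 4*((n : ℝ)) ^ 2*(p₂) + (-8)*(z i) ^ 4*((n : ℝ)) ^ 3*(p₂) + 16*(z i) ^ 6*((n : ℝ)) + (-24)*(z i) ^ 6*((n : ℝ)) ^ 2 + 8*(z i) ^ 6*((n : ℝ)) ^ 3)) := by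
      refine Finset.sum_congr rfl fun i _ => ?_
      exact levelJ z p₂ p₃ p₄ (∑ x, z x ^ 5) p₆ hz hp₂ hp₃ hp₄ rfl hp₆ i
    _ = (-320)*(p₃) ^ 2 + 480*(p₂)*(p₄) + (-240)*(p₂) ^ 3 + 32*((n : ℝ))*(p₆) + 240*((n : ℝ))*(p₃) ^ 2 + (-480)*((n : ℝ))*(p₂)*(p₄) + 232*((n : ℝ))*(p₂) ^ 3 + (-48)*((n : ℝ)) ^ 2*(p₆) + (-48)*((n : ℝ)) ^ 2*(p₃) ^ 2 + 168*((n : ℝ)) ^ 2*(p₂)*(p₄) + (-72)*((n : ℝ)) ^ 2*(p₂) ^ 3 + 16*((n : ℝ)) ^ 3*(p₆) + (-24)*((n : ℝ)) ^ 3*(p₂)*(p₄) + 8*((n : ℝ)) ^ 3*(p₂) ^ 3 := levelI z p₂ p₃ p₄ (∑ x, z x ^ 5) p₆ hz hp₂ hp₃ hp₄ rfl hp₆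
    _ = _ := by ring
end
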